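/- arXiv:1505.04951 — 11 statements merged into one kernel-verified Lean document; each statement's English description precedes it below -/
import Mathlib

section
/- There exists a constant c > 0 such that for every real number s with |s| ≥ 2, |√(is)·cos(s)·cosh(√(is)) + i·sin(s)·sinh(√(is))| ≥ c·exp(|s|^{1/2}/√2). -/
/-!
For `s ≠ 0` the principal root `μ = √(is)` has `re μ = |im μ| = √(|s|/2)`. Expanding `cosh` and
`sinh`, the expression is `e^μ (μ cos s + i sin s)/2 + e^{-μ} (μ cos s - i sin s)/2`. Since
`cos² s + sin² s = 1`, the first coefficient has norm at least `2/5` once `re μ ≥ 1` (either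
`re μ · |cos s|` or `|sin s|` is large), while the second grows only linearly in `re μ`; so the
`e^μ` term dominates and the norm is at least `e^{re μ} / 50`.
-/

open Complex

namespace Complex

theorem mul_cosh_add_mul_sinh_eq (p q μ : ℂ) :
    p * cosh μ + q * sinh μ = exp μ * ((p + q) / 2) + exp (-μ) * ((p - q) / 2) := by
  rw [cosh, sinh]
  ring

theorem cpow_half_I_mul_ofReal {s : ℝ} (hs : s ≠ 0) :
    (I * s) ^ (1 / 2 : ℂ) = ⟨√(|s| / 2), s / (2 * √(|s| / 2))⟩ := by
  set a := √(|s| / 2)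
  have ha : 0 < a := Real.sqrt_pos.2 (by positivity)
  have ha_sq : a ^ 2 = |s| / 2 := Real.sq_sqrt (by positivity)
  have hsq : I * s = (⟨a, s / (2 * a)⟩ : ℂ) ^ 2 := by
    apply Complex.ext
    · simp only [mul_re, I_re, ofReal_re, I_im, ofReal_im, pow_two]
      field_simp
      nlinarith [sq_abs s]
    · simp only [mul_im, I_re, ofReal_im, I_im, ofReal_re, pow_two]
      field_simp
      ring
  rw [hsq, one_div, sq_cpow_two_inv ha]

theorem two_fifths_le_norm_mul_add_I_mul {μ : ℂ} {c σ : ℝ} (hre : 1 ≤ μ.re)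
    (him : |μ.im| ≤ μ.re) (hcσ : c ^ 2 + σ ^ 2 = 1) : 2 / 5 ≤ ‖μ * c + I * σ‖ := by
  rcases le_or_gt (2 / 5) (μ.re * |c|) with hc | hc
  · calc (2 / 5 : ℝ) ≤ |μ.re * c| := by rwa [abs_mul, abs_of_pos (by linarith)]
      _ = |(μ * c + I * σ).re| := by simp
      _ ≤ _ := abs_re_le_norm _
  · have hc' : |c| < 2 / 5 := by nlinarith [abs_nonneg c]
    have hσ : 9 / 10 ≤ |σ| := by nlinarith [sq_abs c, sq_abs σ, abs_nonneg c, abs_nonneg σ]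
    have himc : |μ.im * c| < 2 / 5 := by
      rw [abs_mul]; nlinarith [abs_nonneg μ.im, abs_nonneg c]
    calc (2 / 5 : ℝ) ≤ |σ| - |μ.im * c| := by linarith
      _ ≤ |μ.im * c + σ| := by
        have := abs_sub_abs_le_abs_sub σ (-(μ.im * c))
        rwa [abs_neg, sub_neg_eq_add, add_comm] at this
      _ = |(μ * c + I * σ).im| := by simp
      _ ≤ _ := abs_im_le_norm _

theorem norm_mul_sub_I_mul_le {μ : ℂ} {c σ : ℝ} (him : |μ.im| ≤ μ.re) (hcσ : c ^ 2 + σ ^ 2 = 1) :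
    ‖μ * c - I * σ‖ ≤ 3 / 2 * μ.re + 1 := by
  have hre : 0 ≤ μ.re := (abs_nonneg _).trans him
  have hμ : ‖μ‖ ≤ 3 / 2 * μ.re := by
    have hmax : max |μ.re| |μ.im| = μ.re := by
      rw [max_eq_left (him.trans (le_abs_self _)), abs_of_nonneg hre]
    calc ‖μ‖ ≤ √2 * μ.re := hmax ▸ norm_le_sqrt_two_mul_max μ
      _ ≤ 3 / 2 * μ.re := by
        gcongr
        exact Real.sqrt_two_lt_three_halves.le
  have hc : |c| ≤ 1 := by nlinarith [sq_abs c, sq_nonneg σ, abs_nonneg c]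
  have hσ : |σ| ≤ 1 := by nlinarith [sq_abs σ, sq_nonneg c, abs_nonneg σ]
  calc ‖μ * c - I * σ‖ ≤ ‖μ‖ * |c| + |σ| := by
        simpa [norm_mul] using norm_sub_le (μ * c) (I * σ)
    _ ≤ 3 / 2 * μ.re * 1 + 1 := by gcongr
    _ = 3 / 2 * μ.re + 1 := by ring

end Complex

theorem Real.three_halves_mul_add_one_mul_exp_neg_le {a : ℝ} (ha : 1 ≤ a) :
    (3 / 2 * a + 1) * exp (-a) ≤ 9 / 25 * exp a := by
  have hlin : 2 * a - 1 ≤ exp (2 * a - 2) := by linarith [add_one_le_exp (2 * a - 2)]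
  have he : 2.7 < exp 1 := lt_trans (by norm_num) exp_one_gt_d9
  have hsplit : exp a * exp a = exp 1 * exp 1 * exp (2 * a - 2) := by
    simp only [← exp_add]; ring_nf
  have he2 : 7.29 ≤ exp 1 * exp 1 := by nlinarith
  have := mul_le_mul he2 hlin (by linarith) (by positivity)
  rw [exp_neg, ← div_eq_mul_inv, div_le_iff₀ (exp_pos a), mul_assoc, hsplit]
  linarith

theorem Complex.exp_re_div_fifty_le_norm_mul_cosh_add_I_mul_sinh {μ : ℂ} {c σ : ℝ}
    (hre : 1 ≤ μ.re) (him : |μ.im| ≤ μ.re) (hcσ : c ^ 2 + σ ^ 2 = 1) :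
    Real.exp μ.re / 50 ≤ ‖μ * c * cosh μ + I * σ * sinh μ‖ := by
  have hv := two_fifths_le_norm_mul_add_I_mul hre him hcσ
  have hw := norm_mul_sub_I_mul_le him hcσ
  have hexp := Real.three_halves_mul_add_one_mul_exp_neg_le hre
  rw [mul_cosh_add_mul_sinh_eq]
  calc Real.exp μ.re / 50
      ≤ Real.exp μ.re * (2 / 5) / 2 - Real.exp (-μ.re) * (3 / 2 * μ.re + 1) / 2 := by linarith
    _ ≤ ‖exp μ‖ * ‖μ * c + I * σ‖ / 2 - ‖exp (-μ)‖ * ‖μ * c - I * σ‖ / 2 := by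
        rw [norm_exp, norm_exp, neg_re]
        gcongr
    _ ≤ _ := by
        simpa [norm_mul, mul_div_assoc] using
          norm_sub_norm_le (exp μ * ((μ * c + I * σ) / 2)) (-(exp (-μ) * ((μ * c - I * σ) / 2)))

/-- There exists a constant `c > 0` such that for every real `s` with `|s| ≥ 2`,
`|√(is)·cos(s)·cosh(√(is)) + i·sin(s)·sinh(√(is))| ≥ c·exp(|s|^{1/2}/√2)`,
where `√z = z ^ (1/2 : ℂ)` is the principal branch of the complex square root. -/
theorem wave_heat_char_function_lower_bound :
    ∃ c : ℝ, 0 < c ∧ ∀ s : ℝ, 2 ≤ |s| →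
      c * Real.exp (Real.sqrt |s| / Real.sqrt 2) ≤
        ‖(Complex.I * s) ^ (1/2 : ℂ) * Complex.cos s *
            Complex.cosh ((Complex.I * s) ^ (1/2 : ℂ)) +
          Complex.I * Complex.sin s * Complex.sinh ((Complex.I * s) ^ (1/2 : ℂ))‖ := by
  refine ⟨1 / 50, by norm_num, fun s hs => ?_⟩
  have hs0 : s ≠ 0 := by rintro rfl; norm_num at hs
  set a := √(|s| / 2)
  have ha : 1 ≤ a := Real.one_le_sqrt.2 (by linarith)
  have ha_sq : a ^ 2 = |s| / 2 := Real.sq_sqrt (by positivity)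
  have him : |s / (2 * a)| = a := by
    rw [abs_div, abs_of_pos (by positivity : 0 < 2 * a)]
    field_simp
    linarith
  rw [← Real.sqrt_div (abs_nonneg s), cpow_half_I_mul_ofReal hs0, ← ofReal_cos, ← ofReal_sin,
    one_div_mul_eq_div]
  exact exp_re_div_fifty_le_norm_mul_cosh_add_I_mul_sinh (μ := ⟨a, s / (2 * a)⟩) ha him.le
    (Real.cos_sq_add_sin_sq s)
end

section
/- For every real number s with |s| ≥ 2, both inequalities |√(is)·cos(s) + i·sin(s)| ≥ 1/(2√2) and |√(is)·cos(s) − i·sin(s)| ≥ 1/(2√2) hold. -/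
open Complex

private lemma key_real (x y c d e : ℝ) (hx : 1 ≤ x^2) (hxy : x^2 = y^2)
    (hcd : c^2 + d^2 = 1) (he : e = y*c + d ∨ e = y*c - d) :
    1/(2*Real.sqrt 2) ≤ |x*c| ∨ 1/(2*Real.sqrt 2) ≤ |e| := by
  have h2 : (0:ℝ) < Real.sqrt 2 := Real.sqrt_pos.mpr (by norm_num)
  set r := 1/(2*Real.sqrt 2) with hrdef
  have hr0 : 0 < r := by positivity
  have hr2 : r^2 = 1/8 := by
    rw [hrdef, div_pow, mul_pow, Real.sq_sqrt (by norm_num : (0:ℝ) ≤ 2)]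
    norm_num
  by_cases h : r ≤ |x*c|
  · exact Or.inl h
  · right
    push_neg at h
    have hxc2 : (x*c)^2 < 1/8 := by nlinarith [abs_nonneg (x*c), _root_.sq_abs (x*c)]
    have hyc2 : (y*c)^2 < 1/8 := by nlinarith [sq_nonneg c]
    have hc2 : c^2 < 1/8 := by nlinarith [sq_nonneg c]
    have hd2 : 1/2 < d^2 := by nlinarith
    have hyc : |y*c| < r := by nlinarith [abs_nonneg (y*c), _root_.sq_abs (y*c)]
    have hdabs : 2*r < |d| := by nlinarith [abs_nonneg d, _root_.sq_abs d]
    have htri : |d| - |y*c| ≤ |e| := by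
      rcases he with rfl | rfl
      · have h1 := abs_add_le (y*c + d) (-(y*c))
        rw [abs_neg] at h1
        have h3 : y*c + d + -(y*c) = d := by ring
        rw [h3] at h1; linarith
      · have h1 := abs_add_le (y*c - d) (-(y*c))
        rw [abs_neg] at h1
        have h3 : y*c - d + -(y*c) = -d := by ring
        rw [h3, abs_neg] at h1; linarith
    linarith

/-- For every real `s` with `|s| ≥ 2`, both `|√(is)·cos(s) + i·sin(s)| ≥ 1/(2√2)` and
`|√(is)·cos(s) − i·sin(s)| ≥ 1/(2√2)`, where `√z = z ^ (1/2 : ℂ)` is the principal branch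
of the complex square root. -/
theorem wave_heat_char_leading_term_lower_bound (s : ℝ) (hs : 2 ≤ |s|) :
    1 / (2 * Real.sqrt 2) ≤
      ‖(Complex.I * s) ^ (1/2 : ℂ) * Complex.cos s + Complex.I * Complex.sin s‖ ∧
    1 / (2 * Real.sqrt 2) ≤
      ‖(Complex.I * s) ^ (1/2 : ℂ) * Complex.cos s - Complex.I * Complex.sin s‖ := by
  rw [← Complex.ofReal_cos, ← Complex.ofReal_sin]
  have hcd : (Real.cos s)^2 + (Real.sin s)^2 = 1 := Real.cos_sq_add_sin_sq s
  have hw2 : ((Complex.I * (s:ℂ)) ^ (1/2 : ℂ)) ^ 2 = Complex.I * s := by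
    rw [show (1/2 : ℂ) = ((2:ℕ):ℂ)⁻¹ by norm_num]
    exact Complex.cpow_nat_inv_pow _ two_ne_zero
  generalize hW : (Complex.I * (s:ℂ)) ^ (1/2 : ℂ) = w at hw2 ⊢
  obtain ⟨x, y⟩ := w
  have hre : x^2 - y^2 = 0 := by
    have := congrArg Complex.re hw2
    simp [pow_two, Complex.mul_re] at this
    nlinarith [this]
  have him : 2*(x*y) = s := by
    have := congrArg Complex.im hw2
    simp [pow_two, Complex.mul_im] at this
    nlinarith [this]
  have hs2 : 4 ≤ s^2 := by nlinarith [_root_.sq_abs s, abs_nonneg s]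
  have hs4 : s^2 = 4*(x^2*y^2) := by rw [← him]; ring
  have hxy : x^2 = y^2 := by linarith
  have hx1 : 1 ≤ x^2 := by nlinarith [sq_nonneg (x^2 - 1), sq_nonneg x]
  constructor
  · have hzre : ((⟨x, y⟩ : ℂ) * ((Real.cos s : ℝ):ℂ) + Complex.I * ((Real.sin s : ℝ):ℂ)).re
        = x * Real.cos s := by simp [Complex.mul_re, Complex.cos_ofReal_re, Complex.sin_ofReal_re]
    have hzim : ((⟨x, y⟩ : ℂ) * ((Real.cos s : ℝ):ℂ) + Complex.I * ((Real.sin s : ℝ):ℂ)).im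
        = y * Real.cos s + Real.sin s := by simp [Complex.mul_im, Complex.cos_ofReal_re, Complex.sin_ofReal_re]
    rcases key_real x y (Real.cos s) (Real.sin s) (y * Real.cos s + Real.sin s)
        hx1 hxy hcd (Or.inl rfl) with h | h
    · exact le_trans (hzre ▸ h) (Complex.abs_re_le_norm _)
    · exact le_trans (hzim ▸ h) (Complex.abs_im_le_norm _)
  · have hzre : ((⟨x, y⟩ : ℂ) * ((Real.cos s : ℝ):ℂ) - Complex.I * ((Real.sin s : ℝ):ℂ)).re
        = x * Real.cos s := by simp [Complex.mul_re, Complex.cos_ofReal_re, Complex.sin_ofReal_re]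
    have hzim : ((⟨x, y⟩ : ℂ) * ((Real.cos s : ℝ):ℂ) - Complex.I * ((Real.sin s : ℝ):ℂ)).im
        = y * Real.cos s - Real.sin s := by simp [Complex.mul_im, Complex.cos_ofReal_re, Complex.sin_ofReal_re]
    rcases key_real x y (Real.cos s) (Real.sin s) (y * Real.cos s - Real.sin s)
        hx1 hxy hcd (Or.inr rfl) with h | h
    · exact le_trans (hzre ▸ h) (Complex.abs_re_le_norm _)
    · exact le_trans (hzim ▸ h) (Complex.abs_im_le_norm _)
end

section
/- There exists a constant C ≥ 0 such that for every absolutely continuous function f : [-1,0] → ℂ with derivative f' ∈ L²(-1,0), every g ∈ L²(-1,0), every real s ≠ 0 and every ξ ∈ [-1,0], one has |∫_{-1}^{ξ} sin(s(ξ−r))·(i·s·f(r) + g(r)) dr| ≤ C·‖f‖_{H¹} + ‖g‖_{L²(-1,0)}. -/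
open MeasureTheory

/-- The `L²` norm of `f` on the interval `(a, b)`. -/
noncomputable def L2norm (a b : ℝ) (f : ℝ → ℂ) : ℝ :=
  Real.sqrt (∫ x in a..b, ‖f x‖ ^ 2)

/-- The `H¹(-1,0)` norm of an absolutely continuous function `f` with derivative `f'`. -/
noncomputable def H1norm (f f' : ℝ → ℂ) : ℝ :=
  Real.sqrt ((∫ x in (-1:ℝ)..0, ‖f x‖ ^ 2) + (∫ x in (-1:ℝ)..0, ‖f' x‖ ^ 2))

/-!
Since `|sin| ≤ 1`, the `g`-part is at most `∫ |g|`. In the `f`-part the kernel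
`s sin(s(ξ - r))` is of size `|s|`, but its primitive `1 - cos(s(ξ - r))` is bounded by `2`
uniformly in `s`. Writing `f = f(-1) + ∫ f'` and exchanging the order of integration (an
integration by parts that only needs `f` to be a primitive) bounds the `f`-part by
`2 |f(-1)| + 2 ∫ |f'|`. Averaging `|f(-1)| ≤ |f(x)| + ∫ |f'|` over the unit interval gives
`|f(-1)| ≤ ∫ |f| + ∫ |f'|`, and on an interval of length one `∫ |h| ≤ ‖h‖_{L²}`.
-/

open Set

theorem integral_norm_le_sqrt_integral_norm_sq {α E : Type*} [MeasurableSpace α]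
    [NormedAddCommGroup E] {μ : Measure α} [IsProbabilityMeasure μ] {h : α → E}
    (hh : MemLp h 2 μ) : ∫ x, ‖h x‖ ∂μ ≤ √(∫ x, ‖h x‖ ^ 2 ∂μ) := by
  have hvar := ProbabilityTheory.variance_nonneg (fun x => ‖h x‖) μ
  rw [ProbabilityTheory.variance_eq_sub hh.norm, sub_nonneg] at hvar
  exact (le_abs_self _).trans (Real.abs_le_sqrt hvar)

theorem MeasureTheory.MemLp.intervalIntegrable {E : Type*} [NormedAddCommGroup E] {h : ℝ → E}
    {a b : ℝ} {p : ENNReal} (hp : 1 ≤ p) (hab : a ≤ b)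
    (hh : MemLp h p (volume.restrict (Ioc a b))) : IntervalIntegrable h volume a b :=
  (intervalIntegrable_iff_integrableOn_Ioc_of_le hab).2 (hh.integrable hp)

theorem ContinuousOn.memLp_restrict_Icc {E : Type*} [NormedAddCommGroup E] {f : ℝ → E}
    {a b : ℝ} (hf : ContinuousOn f (Icc a b)) (p : ENNReal) :
    MemLp f p (volume.restrict (Icc a b)) := by
  obtain ⟨C, hC⟩ := isCompact_Icc.exists_bound_of_continuousOn hf
  refine (memLp_top_of_bound (hf.aestronglyMeasurable_of_isCompact isCompact_Icc
    measurableSet_Icc) C ?_).mono_exponent le_top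
  filter_upwards [ae_restrict_mem measurableSet_Icc] using hC

section Primitive

variable {E : Type*} [NormedAddCommGroup E] {f φ : ℝ → E} {a b : ℝ}

theorem integral_norm_le_integral_norm_of_le {ξ : ℝ} (haξ : a ≤ ξ) (hξb : ξ ≤ b)
    (hφ : IntervalIntegrable φ volume a b) :
    ∫ t in a..ξ, ‖φ t‖ ≤ ∫ t in a..b, ‖φ t‖ :=
  intervalIntegral.integral_mono_interval le_rfl haξ hξb (ae_of_all _ fun _ => norm_nonneg _)
    hφ.norm

variable [NormedSpace ℝ E]

theorem continuousOn_Icc_of_eq_add_primitive (hab : a ≤ b)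
    (hφ : IntervalIntegrable φ volume a b) (hf : ∀ x ∈ Icc a b, f x = f a + ∫ t in a..x, φ t) :
    ContinuousOn f (Icc a b) := by
  rw [← uIcc_of_le hab] at hf ⊢
  exact (continuousOn_const.add
    (intervalIntegral.continuousOn_primitive_interval' hφ left_mem_uIcc)).congr hf

theorem mul_norm_le_integral_norm_add_of_eq_add_primitive (hab : a ≤ b)
    (hφ : IntervalIntegrable φ volume a b) (hf : ∀ x ∈ Icc a b, f x = f a + ∫ t in a..x, φ t) :
    (b - a) * ‖f a‖ ≤ (∫ x in a..b, ‖f x‖) + (b - a) * ∫ t in a..b, ‖φ t‖ := by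
  have hpoint : ∀ x ∈ Icc a b, ‖f a‖ ≤ ‖f x‖ + ∫ t in a..b, ‖φ t‖ := by
    intro x hx
    calc ‖f a‖ = ‖f x - ∫ t in a..x, φ t‖ := by rw [hf x hx, add_sub_cancel_right]
      _ ≤ ‖f x‖ + ‖∫ t in a..x, φ t‖ := norm_sub_le _ _
      _ ≤ ‖f x‖ + ∫ t in a..b, ‖φ t‖ := by
        gcongr
        exact (intervalIntegral.norm_integral_le_integral_norm hx.1).trans
          (integral_norm_le_integral_norm_of_le hx.1 hx.2 hφ)
  have hfi : IntervalIntegrable (fun x => ‖f x‖) volume a b :=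
    (continuousOn_Icc_of_eq_add_primitive hab hφ hf).norm.intervalIntegrable_of_Icc hab
  calc (b - a) * ‖f a‖ = ∫ _ in a..b, ‖f a‖ := by simp
    _ ≤ ∫ x in a..b, (‖f x‖ + ∫ t in a..b, ‖φ t‖) :=
      intervalIntegral.integral_mono_on hab intervalIntegrable_const
        (hfi.add intervalIntegrable_const) hpoint
    _ = _ := by simp [intervalIntegral.integral_add hfi intervalIntegrable_const]

variable [CompleteSpace E] {k : ℝ → ℝ}

theorem integral_smul_primitive (hab : a ≤ b) (hk : Continuous k)
    (hφ : IntervalIntegrable φ volume a b) :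
    ∫ r in a..b, k r • ∫ t in a..r, φ t = ∫ t in a..b, (∫ r in t..b, k r) • φ t := by
  set μ := volume.restrict (Ioc a b)
  let G : ℝ → ℝ → E := fun r t => (Iic r).indicator (fun t => k r • φ t) t
  have hG : Integrable (Function.uncurry G) (μ.prod μ) := by
    have hGeq : Function.uncurry G =
        {p : ℝ × ℝ | p.2 ≤ p.1}.indicator (fun p => k p.1 • φ p.2) := by
      funext ⟨r, t⟩
      simp [G, indicator_apply]
    rw [hGeq]
    exact ((hk.integrableOn_Ioc (μ := volume)).smul_prod hφ.1).indicator
      (measurableSet_le measurable_snd measurable_fst)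
  have hinner_t : ∀ r ∈ Ioc a b, ∫ t, G r t ∂μ = k r • ∫ t in a..r, φ t := by
    intro r hr
    rw [setIntegral_indicator measurableSet_Iic, Ioc_inter_Iic, min_eq_right hr.2,
      integral_smul, intervalIntegral.integral_of_le hr.1.le]
  have hinner_r : ∀ t ∈ Ioc a b, ∫ r, G r t ∂μ = (∫ r in t..b, k r) • φ t := by
    intro t ht
    have hG_r : ∀ r, G r t = (Ici t).indicator (fun r => k r • φ t) r := by
      intro r
      simp [G, indicator_apply]
    have hset : Ioc a b ∩ Ici t = Icc t b := by
      ext r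
      simp only [mem_inter_iff, mem_Ioc, mem_Ici, mem_Icc]
      grind
    simp_rw [hG_r]
    rw [setIntegral_indicator measurableSet_Ici, hset, integral_Icc_eq_integral_Ioc,
      integral_smul_const, intervalIntegral.integral_of_le ht.2]
  rw [intervalIntegral.integral_of_le hab, intervalIntegral.integral_of_le hab,
    ← setIntegral_congr_fun measurableSet_Ioc hinner_t,
    ← setIntegral_congr_fun measurableSet_Ioc hinner_r]
  exact integral_integral_swap hG

theorem integral_smul_eq_of_eq_add_primitive (hab : a ≤ b) (hk : Continuous k)
    (hφ : IntervalIntegrable φ volume a b) (hf : ∀ x ∈ Icc a b, f x = f a + ∫ t in a..x, φ t) :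
    ∫ r in a..b, k r • f r =
      (∫ r in a..b, k r) • f a + ∫ t in a..b, (∫ r in t..b, k r) • φ t := by
  have hconst : IntervalIntegrable (fun r => k r • f a) volume a b :=
    (hk.smul continuous_const).intervalIntegrable a b
  have hprim : IntervalIntegrable (fun r => k r • ∫ t in a..r, φ t) volume a b :=
    (hk.continuousOn.smul (intervalIntegral.continuousOn_primitive_interval' hφ
      left_mem_uIcc)).intervalIntegrable
  rw [← integral_smul_primitive hab hk hφ, ← intervalIntegral.integral_smul_const,
    ← intervalIntegral.integral_add hconst hprim]
  refine intervalIntegral.integral_congr fun r hr => ?_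
  simp only [hf r (uIcc_of_le hab ▸ hr), smul_add]

theorem norm_integral_smul_le_of_eq_add_primitive {M : ℝ} (hab : a ≤ b) (hk : Continuous k)
    (hφ : IntervalIntegrable φ volume a b) (hf : ∀ x ∈ Icc a b, f x = f a + ∫ t in a..x, φ t)
    (hM : ∀ t ∈ Icc a b, |∫ r in t..b, k r| ≤ M) :
    ‖∫ r in a..b, k r • f r‖ ≤ M * ‖f a‖ + M * ∫ t in a..b, ‖φ t‖ := by
  rw [integral_smul_eq_of_eq_add_primitive hab hk hφ hf, ← intervalIntegral.integral_const_mul]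
  refine (norm_add_le _ _).trans (add_le_add ?_ ?_)
  · rw [norm_smul]
    exact mul_le_mul_of_nonneg_right (hM a (left_mem_Icc.2 hab)) (norm_nonneg _)
  · refine intervalIntegral.norm_integral_le_of_norm_le hab (ae_of_all _ fun t ht => ?_)
      (hφ.norm.const_mul M)
    rw [norm_smul]
    exact mul_le_mul_of_nonneg_right (hM t (Ioc_subset_Icc_self ht)) (norm_nonneg _)

end Primitive

theorem integral_mul_sin_mul_sub (s b t : ℝ) :
    ∫ r in t..b, s * Real.sin (s * (b - r)) = 1 - Real.cos (s * (b - t)) := by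
  have hderiv (r : ℝ) : HasDerivAt (fun r => Real.cos (s * (b - r)))
      (s * Real.sin (s * (b - r))) r :=
    ((Real.hasDerivAt_cos _).comp r (((hasDerivAt_id r).const_sub b).const_mul s)).congr_deriv
      (by simp only [id]; ring)
  rw [intervalIntegral.integral_eq_sub_of_hasDerivAt (fun r _ => hderiv r)
    (Continuous.intervalIntegrable (by fun_prop) _ _), sub_self, mul_zero, Real.cos_zero]

theorem abs_integral_mul_sin_mul_sub_le (s b t : ℝ) :
    |∫ r in t..b, s * Real.sin (s * (b - r))| ≤ 2 := by
  rw [integral_mul_sin_mul_sub, abs_le]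
  constructor <;> linarith [Real.neg_one_le_cos (s * (b - t)), Real.cos_le_one (s * (b - t))]

theorem norm_integral_sin_smul_le_integral_norm {E : Type*} [NormedAddCommGroup E]
    [NormedSpace ℝ E] {g : ℝ → E} {s a b : ℝ} (hab : a ≤ b)
    (hg : IntervalIntegrable g volume a b) :
    ‖∫ r in a..b, Real.sin (s * (b - r)) • g r‖ ≤ ∫ r in a..b, ‖g r‖ := by
  refine intervalIntegral.norm_integral_le_of_norm_le hab (ae_of_all _ fun r _ => ?_) hg.norm
  rw [norm_smul]
  exact mul_le_of_le_one_left (norm_nonneg _) (by simpa using Real.abs_sin_le_one _)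

theorem integral_sin_mul_eq_smul_add {f g : ℝ → ℂ} {s a b : ℝ}
    (hf : IntervalIntegrable f volume a b) (hg : IntervalIntegrable g volume a b) :
    ∫ r in a..b, Complex.sin (s * (b - r)) * (Complex.I * s * f r + g r) =
      Complex.I • (∫ r in a..b, (s * Real.sin (s * (b - r))) • f r) +
        ∫ r in a..b, Real.sin (s * (b - r)) • g r := by
  have hfk : IntervalIntegrable (fun r => Complex.I • (s * Real.sin (s * (b - r))) • f r)
      volume a b :=
    (hf.continuousOn_smul (by fun_prop)).smul Complex.I
  rw [← intervalIntegral.integral_smul, ← intervalIntegral.integral_add hfk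
    (hg.continuousOn_smul (by fun_prop))]
  refine intervalIntegral.integral_congr fun r _ => ?_
  simp only [Complex.real_smul, smul_eq_mul]
  push_cast
  ring

instance : IsProbabilityMeasure (volume.restrict (Ioc (-1 : ℝ) 0)) := ⟨by simp⟩

theorem integral_norm_neg_one_zero_le_sqrt_integral_norm_sq {E : Type*} [NormedAddCommGroup E]
    {h : ℝ → E} (hh : MemLp h 2 (volume.restrict (Ioc (-1 : ℝ) 0))) :
    ∫ x in (-1 : ℝ)..0, ‖h x‖ ≤ √(∫ x in (-1 : ℝ)..0, ‖h x‖ ^ 2) := by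
  simpa only [intervalIntegral.integral_of_le (by norm_num : (-1 : ℝ) ≤ 0)]
    using integral_norm_le_sqrt_integral_norm_sq hh

theorem sqrt_integral_norm_sq_le_H1norm (f f' : ℝ → ℂ) :
    √(∫ x in (-1 : ℝ)..0, ‖f x‖ ^ 2) ≤ H1norm f f' := by
  refine Real.sqrt_le_sqrt (le_add_of_nonneg_right ?_)
  exact intervalIntegral.integral_nonneg (by norm_num) fun _ _ => sq_nonneg _

theorem sqrt_integral_norm_deriv_sq_le_H1norm (f f' : ℝ → ℂ) :
    √(∫ x in (-1 : ℝ)..0, ‖f' x‖ ^ 2) ≤ H1norm f f' := by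
  refine Real.sqrt_le_sqrt (le_add_of_nonneg_left ?_)
  exact intervalIntegral.integral_nonneg (by norm_num) fun _ _ => sq_nonneg _

theorem norm_apply_neg_one_add_integral_norm_le_H1norm {f f' : ℝ → ℂ}
    (hf : ∀ x ∈ Icc (-1 : ℝ) 0, f x = f (-1) + ∫ t in (-1 : ℝ)..x, f' t)
    (hf' : MemLp f' 2 (volume.restrict (Ioc (-1 : ℝ) 0))) :
    ‖f (-1)‖ + ∫ t in (-1 : ℝ)..0, ‖f' t‖ ≤ 3 * H1norm f f' := by
  have hf'i := hf'.intervalIntegrable one_le_two (by norm_num)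
  have hf2 : MemLp f 2 (volume.restrict (Ioc (-1 : ℝ) 0)) :=
    ((continuousOn_Icc_of_eq_add_primitive (by norm_num) hf'i hf).memLp_restrict_Icc
      2).mono_measure (Measure.restrict_mono Ioc_subset_Icc_self le_rfl)
  have hend := mul_norm_le_integral_norm_add_of_eq_add_primitive (by norm_num) hf'i hf
  norm_num at hend
  linarith [integral_norm_neg_one_zero_le_sqrt_integral_norm_sq hf2,
    integral_norm_neg_one_zero_le_sqrt_integral_norm_sq hf',
    sqrt_integral_norm_sq_le_H1norm f f', sqrt_integral_norm_deriv_sq_le_H1norm f f']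

/-- There is a constant `C ≥ 0` such that for every absolutely continuous `f : [-1,0] → ℂ`
with derivative `f' ∈ L²(-1,0)`, every `g ∈ L²(-1,0)`, every real `s ≠ 0` and every
`ξ ∈ [-1,0]`, one has
`|∫_{-1}^{ξ} sin(s(ξ−r))·(i·s·f(r) + g(r)) dr| ≤ C·‖f‖_{H¹} + ‖g‖_{L²(-1,0)}`. -/
theorem sine_convolution_estimate :
    ∃ C : ℝ, 0 ≤ C ∧ ∀ f f' g : ℝ → ℂ,
      (∀ x ∈ Set.Icc (-1:ℝ) 0, f x = f (-1) + ∫ t in (-1:ℝ)..x, f' t) →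
      MemLp f' 2 (volume.restrict (Set.Ioo (-1:ℝ) 0)) →
      MemLp g 2 (volume.restrict (Set.Ioo (-1:ℝ) 0)) →
      ∀ s : ℝ, s ≠ 0 → ∀ ξ ∈ Set.Icc (-1:ℝ) 0,
        ‖∫ r in (-1:ℝ)..ξ, Complex.sin (s * (ξ - r)) * (Complex.I * s * f r + g r)‖ ≤
          C * H1norm f f' + L2norm (-1) 0 g := by
  refine ⟨6, by norm_num, fun f f' g hf hf' hg s _ ξ hξ => ?_⟩
  rw [Measure.restrict_congr_set Ioo_ae_eq_Ioc] at hf' hg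
  have hsub : uIcc (-1) ξ ⊆ uIcc (-1 : ℝ) 0 := uIcc_subset_uIcc_left (by simpa using hξ)
  have hf'i := hf'.intervalIntegrable one_le_two (by norm_num)
  have hgi := hg.intervalIntegrable one_le_two (by norm_num)
  have hfξ : ∀ x ∈ Icc (-1) ξ, f x = f (-1) + ∫ t in (-1 : ℝ)..x, f' t :=
    fun x hx => hf x ⟨hx.1, hx.2.trans hξ.2⟩
  have hF := norm_integral_smul_le_of_eq_add_primitive hξ.1 (by fun_prop) (hf'i.mono_set hsub)
    hfξ fun t _ => abs_integral_mul_sin_mul_sub_le s ξ t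
  rw [integral_sin_mul_eq_smul_add ((continuousOn_Icc_of_eq_add_primitive hξ.1
    (hf'i.mono_set hsub) hfξ).intervalIntegrable_of_Icc hξ.1) (hgi.mono_set hsub), L2norm]
  calc _ ≤ ‖∫ r in (-1 : ℝ)..ξ, (s * Real.sin (s * (ξ - r))) • f r‖ +
        ‖∫ r in (-1 : ℝ)..ξ, Real.sin (s * (ξ - r)) • g r‖ := by
        refine (norm_add_le _ _).trans_eq ?_
        rw [norm_smul, Complex.norm_I, one_mul]
    _ ≤ _ := by
      linarith [norm_apply_neg_one_add_integral_norm_le_H1norm hf hf',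
        integral_norm_le_integral_norm_of_le hξ.1 hξ.2 hf'i,
        integral_norm_le_integral_norm_of_le hξ.1 hξ.2 hgi,
        norm_integral_sin_smul_le_integral_norm (s := s) hξ.1 (hgi.mono_set hsub),
        integral_norm_neg_one_zero_le_sqrt_integral_norm_sq hg]
end

section
/- For every real number s ≠ 0, √(is)·cosh(is)·cosh(√(is)) + sinh(is)·sinh(√(is)) ≠ 0. -/
open Complex Real


private lemma sinh_add_sin_pos {x : ℝ} (hx : 0 < x) : 0 < Real.sinh x + Real.sin x := by
  rcases lt_or_ge x π with h | h
  · have h1 : 0 < Real.sin x := Real.sin_pos_of_pos_of_lt_pi hx h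
    have h2 : 0 < Real.sinh x := Real.sinh_pos_iff.2 hx
    linarith
  · have h1 : x < Real.sinh x := Real.self_lt_sinh_iff.2 hx
    have h2 : -1 ≤ Real.sin x := Real.neg_one_le_sin x
    have h3 := Real.pi_gt_three
    linarith

private lemma cpow_half_pos (s : ℝ) (hs : 0 < s) :
    (Complex.I * s) ^ (1/2 : ℂ) = (Real.sqrt (s/2) : ℂ) * (1 + Complex.I) := by
  have hne : (Complex.I * s : ℂ) ≠ 0 := by
    simp [Complex.ext_iff, hs.ne']
  rw [Complex.cpow_def_of_ne_zero hne]
  rw [show (Complex.I * s : ℂ) = (s : ℂ) * Complex.I by ring]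
  rw [Complex.log_ofReal_mul hs Complex.I_ne_zero, Complex.log_I]
  rw [show ((Real.log s : ℂ) + ↑π/2 * Complex.I) * (1/2)
      = (Real.log s / 2 : ℝ) + ((π/4 : ℝ) : ℂ) * Complex.I by push_cast; ring]
  rw [Complex.exp_add, Complex.exp_mul_I, ← Complex.ofReal_cos, ← Complex.ofReal_sin,
    Real.cos_pi_div_four, Real.sin_pi_div_four, ← Complex.ofReal_exp]
  have h1 : Real.exp (Real.log s / 2) = Real.sqrt s := by
    rw [← Real.log_sqrt hs.le, Real.exp_log (Real.sqrt_pos.2 hs)]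
  have h0 : Real.sqrt (s/2) * Real.sqrt 2 = Real.sqrt s := by
    rw [← Real.sqrt_mul (by positivity)]; norm_num
  have h3 : Real.sqrt 2 * Real.sqrt 2 = 2 := Real.mul_self_sqrt (by norm_num)
  have h2 : Real.sqrt s * (Real.sqrt 2 / 2) = Real.sqrt (s/2) := by
    linear_combination (-(Real.sqrt 2)/2) * h0 + (Real.sqrt (s/2)/2) * h3
  rw [h1, ← h2]
  push_cast
  ring

private lemma key_pos (s : ℝ) (hs : 0 < s) :
    (Complex.I * s) ^ (1/2 : ℂ) * Complex.cosh (Complex.I * s) *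
        Complex.cosh ((Complex.I * s) ^ (1/2 : ℂ)) +
      Complex.sinh (Complex.I * s) * Complex.sinh ((Complex.I * s) ^ (1/2 : ℂ)) ≠ 0 := by
  set a : ℝ := Real.sqrt (s/2) with ha_def
  have ha : 0 < a := Real.sqrt_pos.2 (by linarith)
  have hw : (Complex.I * s) ^ (1/2 : ℂ) = (a : ℂ) * (1 + Complex.I) := cpow_half_pos s hs
  set A := Real.cosh a
  set B := Real.sinh a
  set c := Real.cos a
  set d := Real.sin a
  set cs := Real.cos s
  set ss := Real.sin s
  have hcoshw : Complex.cosh ((a:ℂ) * (1 + Complex.I))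
      = (A * c : ℝ) + (B * d : ℝ) * Complex.I := by
    rw [show (a:ℂ) * (1 + Complex.I) = (a:ℂ) + (a:ℂ) * Complex.I by ring,
      Complex.cosh_add, Complex.cosh_mul_I, Complex.sinh_mul_I]
    simp only [A, B, c, d]
    push_cast
    ring
  have hsinhw : Complex.sinh ((a:ℂ) * (1 + Complex.I))
      = (B * c : ℝ) + (A * d : ℝ) * Complex.I := by
    rw [show (a:ℂ) * (1 + Complex.I) = (a:ℂ) + (a:ℂ) * Complex.I by ring,
      Complex.sinh_add, Complex.cosh_mul_I, Complex.sinh_mul_I]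
    simp only [A, B, c, d]
    push_cast
    ring
  have hcoshz : Complex.cosh (Complex.I * s) = (cs : ℝ) := by
    rw [show Complex.I * (s:ℂ) = (s:ℂ) * Complex.I by ring, Complex.cosh_mul_I,
      ← Complex.ofReal_cos]
  have hsinhz : Complex.sinh (Complex.I * s) = (ss : ℝ) * Complex.I := by
    rw [show Complex.I * (s:ℂ) = (s:ℂ) * Complex.I by ring, Complex.sinh_mul_I,
      ← Complex.ofReal_sin]
  intro hE
  rw [hw, hcoshw, hsinhw, hcoshz, hsinhz] at hE
  have hEri : ((a*cs*(A*c - B*d) - ss*(A*d) : ℝ) : ℂ)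
      + ((a*cs*(A*c + B*d) + ss*(B*c) : ℝ) : ℂ) * Complex.I = 0 := by
    rw [← hE]; push_cast
    have : Complex.I * Complex.I = -1 := Complex.I_mul_I
    ring_nf
    rw [Complex.I_sq]
    ring
  rw [Complex.ext_iff] at hEri
  simp only [Complex.add_re, Complex.add_im, Complex.ofReal_re, Complex.ofReal_im,
    Complex.mul_re, Complex.mul_im, Complex.I_re, Complex.I_im, Complex.zero_re,
    Complex.zero_im, mul_zero, mul_one, zero_mul, add_zero, zero_add, sub_zero] at hEri
  obtain ⟨hre, him⟩ := hEri
  -- pythagorean facts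
  have hcd : c^2 + d^2 = 1 := by
    show Real.cos a ^ 2 + Real.sin a ^ 2 = 1
    linarith [Real.sin_sq_add_cos_sq a]
  have hAB : A^2 - B^2 = 1 := by
    show Real.cosh a ^ 2 - Real.sinh a ^ 2 = 1
    nlinarith [Real.cosh_sq_sub_sinh_sq a]
  have hABcd : 0 < A*B + c*d := by
    have h2a := sinh_add_sin_pos (by linarith : (0:ℝ) < 2*a)
    have hs2 : Real.sinh (2*a) = 2*B*A := by rw [Real.sinh_two_mul]
    have hc2 : Real.sin (2*a) = 2*d*c := by rw [Real.sin_two_mul]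
    nlinarith
  have hss : ss = 0 := by
    have h3 : ss * (A*B + c*d) = 0 := by
      linear_combination (A*c - B*d) * him - (A*c + B*d) * hre
        - ss*A*B*hcd - ss*c*d*hAB
    rcases mul_eq_zero.1 h3 with h | h
    · exact h
    · linarith
  rw [hss] at hre him
  have hcs2 : cs^2 = 1 := by
    have := Real.sin_sq_add_cos_sq s
    show Real.cos s ^ 2 = 1
    nlinarith [Real.sin_sq_add_cos_sq s, hss]
  have hacs : a * cs ≠ 0 := by
    intro h
    rcases mul_eq_zero.1 h with h | h
    · exact ha.ne' h
    · rw [h] at hcs2; norm_num at hcs2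
  have e1 : (a*cs) * (A*c) = 0 := by linarith
  have e2 : (a*cs) * (B*d) = 0 := by linarith
  have hc0 : c = 0 := by
    rcases mul_eq_zero.1 e1 with h | h
    · exact absurd h hacs
    · rcases mul_eq_zero.1 h with h | h
      · exact absurd h (ne_of_gt (Real.cosh_pos a))
      · exact h
  have hd0 : d = 0 := by
    rcases mul_eq_zero.1 e2 with h | h
    · exact absurd h hacs
    · rcases mul_eq_zero.1 h with h | h
      · exact absurd h (ne_of_gt (Real.sinh_pos_iff.2 ha))
      · exact h
  rw [hc0, hd0] at hcd
  norm_num at hcd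

/-- For every real `s ≠ 0`, `√(is)·cosh(is)·cosh(√(is)) + sinh(is)·sinh(√(is)) ≠ 0`,
where `√z = z ^ (1/2 : ℂ)` is the principal branch of the complex square root.
(The only point of the spectrum of the wave-heat generator with Neumann condition
on the imaginary axis is 0.) -/
theorem wave_heat_neumann_no_spectrum_on_imaginary_axis (s : ℝ) (hs : s ≠ 0) :
    (Complex.I * s) ^ (1/2 : ℂ) * Complex.cosh (Complex.I * s) *
        Complex.cosh ((Complex.I * s) ^ (1/2 : ℂ)) +
      Complex.sinh (Complex.I * s) * Complex.sinh ((Complex.I * s) ^ (1/2 : ℂ)) ≠ 0 := by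
  rcases hs.lt_or_gt with hneg | hpos
  · have ht : 0 < -s := by linarith
    have hconj : (Complex.I * s : ℂ) = (starRingEnd ℂ) (Complex.I * ((-s : ℝ) : ℂ)) := by
      simp [Complex.ext_iff]
    have harg : (Complex.I * ((-s : ℝ) : ℂ)).arg ≠ π := by
      intro h
      rw [Complex.arg_eq_pi_iff] at h
      have : (Complex.I * ((-s : ℝ) : ℂ)).im = -s := by simp
      rw [this] at h
      linarith [h.2]
    have hwconj : (Complex.I * (s : ℂ)) ^ (1/2 : ℂ)
        = (starRingEnd ℂ) ((Complex.I * ((-s : ℝ) : ℂ)) ^ (1/2 : ℂ)) := by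
      rw [hconj, Complex.conj_cpow _ _ harg]
      congr 1
      congr 1
      simp [Complex.ext_iff]
    intro h0
    apply key_pos (-s) ht
    have hE' : (starRingEnd ℂ) ((Complex.I * ((-s : ℝ) : ℂ)) ^ (1/2 : ℂ) *
          Complex.cosh (Complex.I * ((-s : ℝ) : ℂ)) *
          Complex.cosh ((Complex.I * ((-s : ℝ) : ℂ)) ^ (1/2 : ℂ)) +
        Complex.sinh (Complex.I * ((-s : ℝ) : ℂ)) *
          Complex.sinh ((Complex.I * ((-s : ℝ) : ℂ)) ^ (1/2 : ℂ)))
        = (Complex.I * s) ^ (1/2 : ℂ) * Complex.cosh (Complex.I * s) *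
            Complex.cosh ((Complex.I * s) ^ (1/2 : ℂ)) +
          Complex.sinh (Complex.I * s) * Complex.sinh ((Complex.I * s) ^ (1/2 : ℂ)) := by
      rw [map_add, map_mul, map_mul, map_mul, ← Complex.cosh_conj, ← Complex.sinh_conj,
        ← Complex.cosh_conj, ← Complex.sinh_conj, ← hwconj, ← hconj]
    rw [← hE'] at h0
    exact star_eq_zero.mp h0
  · exact key_pos s hpos
end

section
/- Let λ ∈ ℂ with λ ≠ 0. There exist twice continuously differentiable functions u : [-1,0] → ℂ and w : [0,1] → ℂ, not both identically zero, satisfying u''(ξ) = λ²·u(ξ) for all ξ ∈ [-1,0], w''(ξ) = λ·w(ξ) for all ξ ∈ [0,1], u'(-1) = 0, w(1) = 0, λ·u(0) = w(0) and u'(0) = w'(0), if and only if √λ·cosh(λ)·cosh(√λ) + sinh(λ)·sinh(√λ) = 0. -/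
/-!
On `[-1, 0]` the Neumann condition at `-1` forces `u = A cosh (λ (ξ + 1))`, and on `[0, 1]` the
Dirichlet condition at `1` forces `w = B sinh (√λ (ξ - 1))`. The two transmission conditions at
`0` are then a homogeneous linear system in `(A, B)` whose determinant is
`-λ (√λ cosh λ cosh √λ + sinh λ sinh √λ)`, so a nonzero solution exists exactly when this
vanishes. Uniqueness of solutions of `f'' = k f` with given initial data comes from the
Grönwall uniqueness theorem for the linear first-order system satisfied by `(f, f')`.
-/

open Complex Set

noncomputable def coshSinhComb (c : ℂ) (a : ℝ) (A B : ℂ) (t : ℝ) : ℂ :=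
  A * cosh (c * (t - a)) + B * sinh (c * (t - a))

section coshSinhComb

variable (c : ℂ) (a : ℝ) (A B : ℂ)

@[simp]
theorem coshSinhComb_self : coshSinhComb c a A B a = A := by
  simp [coshSinhComb]

theorem hasDerivAt_coshSinhComb (t : ℝ) :
    HasDerivAt (coshSinhComb c a A B) (coshSinhComb c a (c * B) (c * A) t) t := by
  have hlin : HasDerivAt (fun s : ℝ => c * ((s : ℂ) - a)) c t := by
    simpa using ((hasDerivAt_id t).ofReal_comp.sub_const (a : ℂ)).const_mul c
  have := ((hasDerivAt_cosh _).comp t hlin).const_mul A |>.add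
    (((hasDerivAt_sinh _).comp t hlin).const_mul B)
  exact this.congr_deriv (by simp only [coshSinhComb]; ring)

theorem deriv_coshSinhComb :
    deriv (coshSinhComb c a A B) = coshSinhComb c a (c * B) (c * A) :=
  funext fun t => (hasDerivAt_coshSinhComb c a A B t).deriv

theorem deriv_deriv_coshSinhComb (t : ℝ) :
    deriv (deriv (coshSinhComb c a A B)) t = c ^ 2 * coshSinhComb c a A B t := by
  simp only [deriv_coshSinhComb, coshSinhComb]
  ring

theorem contDiff_coshSinhComb {n : WithTop ℕ∞} : ContDiff ℝ n (coshSinhComb c a A B) := by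
  have hlin : ContDiff ℝ n (fun s : ℝ => c * ((s : ℂ) - a)) :=
    contDiff_const.mul (ofRealCLM.contDiff.sub contDiff_const)
  exact ((contDiff_cosh.restrict_scalars ℝ).comp hlin).const_smul A |>.add
    (((contDiff_sinh.restrict_scalars ℝ).comp hlin).const_smul B)

end coshSinhComb

theorem hasDerivAt_prodMk_deriv_of_contDiff_two {f : ℝ → ℂ} (hf : ContDiff ℝ 2 f) (t : ℝ) :
    HasDerivAt (fun s => (f s, deriv f s)) (deriv f t, deriv (deriv f) t) t := by
  have hf' : ContDiff ℝ 1 (deriv f) := hf.iterate_deriv' 1 1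
  exact ((hf.differentiable (by norm_num)) t).hasDerivAt.prodMk
    ((hf'.differentiable one_ne_zero) t).hasDerivAt

theorem eqOn_of_deriv_deriv_eq_mul {k : ℂ} {f g : ℝ → ℂ} {a b : ℝ}
    (hf : ContDiff ℝ 2 f) (hg : ContDiff ℝ 2 g)
    (hf'' : ∀ t ∈ Ico a b, deriv (deriv f) t = k * f t)
    (hg'' : ∀ t ∈ Ico a b, deriv (deriv g) t = k * g t)
    (h₀ : f a = g a) (h₁ : deriv f a = deriv g a) :
    EqOn f g (Icc a b) ∧ EqOn (deriv f) (deriv g) (Icc a b) := by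
  let L : ℂ × ℂ →L[ℂ] ℂ × ℂ :=
    (ContinuousLinearMap.snd ℂ ℂ ℂ).prod (k • ContinuousLinearMap.fst ℂ ℂ ℂ)
  have hphase : ∀ {h : ℝ → ℂ}, ContDiff ℝ 2 h →
      (∀ t ∈ Ico a b, deriv (deriv h) t = k * h t) →
      ∀ t ∈ Ico a b, HasDerivWithinAt (fun s => (h s, deriv h s))
        (L (h t, deriv h t)) (Ici t) t := by
    intro h hh hh'' t ht
    have := hasDerivAt_prodMk_deriv_of_contDiff_two hh t
    rw [hh'' t ht] at this
    exact this.hasDerivWithinAt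
  have hcont : ∀ {h : ℝ → ℂ}, ContDiff ℝ 2 h →
      ContinuousOn (fun s => (h s, deriv h s)) (Icc a b) :=
    fun hh => (continuous_iff_continuousAt.2 fun t =>
      (hasDerivAt_prodMk_deriv_of_contDiff_two hh t).continuousAt).continuousOn
  have := ODE_solution_unique (v := fun _ => L) (fun _ => L.lipschitz) (hcont hf)
    (hphase hf hf'') (hcont hg) (hphase hg hg'') (Prod.ext h₀ h₁)
  exact ⟨fun t ht => congrArg Prod.fst (this ht), fun t ht => congrArg Prod.snd (this ht)⟩

theorem eqOn_coshSinhComb {c : ℂ} (hc : c ≠ 0) {f : ℝ → ℂ} {a b : ℝ}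
    (hf : ContDiff ℝ 2 f)
    (hf'' : ∀ t ∈ Icc a b, deriv (deriv f) t = c ^ 2 * f t) :
    EqOn f (coshSinhComb c a (f a) (deriv f a / c)) (Icc a b) ∧
      EqOn (deriv f) (coshSinhComb c a (deriv f a) (c * f a)) (Icc a b) := by
  have h := eqOn_of_deriv_deriv_eq_mul hf (contDiff_coshSinhComb c a (f a) (deriv f a / c))
    (fun t ht => hf'' t (Ico_subset_Icc_self ht))
    (fun t _ => deriv_deriv_coshSinhComb c a _ _ t) (coshSinhComb_self c a _ _).symm
    (by rw [deriv_coshSinhComb, coshSinhComb_self, mul_div_cancel₀ _ hc])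
  rwa [deriv_coshSinhComb, mul_div_cancel₀ _ hc] at h

/-- Of the null vectors read off the two rows of the singular transmission matrix, one has
`A ≠ 0` because `cosh m` and `sinh m` never vanish together. -/
theorem exists_coupling_coeffs {l m : ℂ} (hm : m ≠ 0)
    (hD : m * cosh l * cosh m + sinh l * sinh m = 0) :
    ∃ A B : ℂ, A ≠ 0 ∧ l * A * cosh l = -(B * sinh m) ∧
      l * A * sinh l = m * B * cosh m := by
  by_cases hs : sinh m = 0
  · have hc : cosh m ≠ 0 := fun hc => by simpa [hc, hs] using cosh_sq_sub_sinh_sq m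
    exact ⟨m * cosh m, l * sinh l, mul_ne_zero hm hc, by linear_combination l * hD, by ring⟩
  · exact ⟨sinh m, -(l * cosh l), hs, by ring, by linear_combination l * hD⟩

theorem exists_coupled_solution_of_det_eq_zero {l m : ℂ} (hm : m ≠ 0) (hml : m ^ 2 = l)
    (hD : m * cosh l * cosh m + sinh l * sinh m = 0) :
    ∃ u w : ℝ → ℂ, ContDiff ℝ 2 u ∧ ContDiff ℝ 2 w ∧
        (∀ ξ ∈ Icc (-1:ℝ) 0, deriv (deriv u) ξ = l ^ 2 * u ξ) ∧
        (∀ ξ ∈ Icc (0:ℝ) 1, deriv (deriv w) ξ = l * w ξ) ∧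
        deriv u (-1) = 0 ∧ w 1 = 0 ∧ l * u 0 = w 0 ∧ deriv u 0 = deriv w 0 ∧
        ¬ ((∀ ξ ∈ Icc (-1:ℝ) 0, u ξ = 0) ∧ (∀ ξ ∈ Icc (0:ℝ) 1, w ξ = 0)) := by
  obtain ⟨A, B, hA, h₀, h₁⟩ := exists_coupling_coeffs hm hD
  refine ⟨coshSinhComb l (-1) A 0, coshSinhComb m 1 0 B, contDiff_coshSinhComb ..,
    contDiff_coshSinhComb .., fun ξ _ => deriv_deriv_coshSinhComb ..,
    fun ξ _ => hml ▸ deriv_deriv_coshSinhComb .., ?_, ?_, ?_, ?_,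
    fun h => hA (by simpa using h.1 (-1) (by norm_num))⟩
  · simp [deriv_coshSinhComb, coshSinhComb]
  · simp [coshSinhComb]
  · simpa [coshSinhComb, mul_assoc] using h₀
  · simpa [deriv_coshSinhComb, coshSinhComb] using h₁

theorem coupled_solution_eq_zero_of_det_ne_zero {l m : ℂ} (hm : m ≠ 0) (hml : m ^ 2 = l)
    (hD : m * cosh l * cosh m + sinh l * sinh m ≠ 0) {u w : ℝ → ℂ}
    (hu : ContDiff ℝ 2 u) (hw : ContDiff ℝ 2 w)
    (hu'' : ∀ ξ ∈ Icc (-1:ℝ) 0, deriv (deriv u) ξ = l ^ 2 * u ξ)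
    (hw'' : ∀ ξ ∈ Icc (0:ℝ) 1, deriv (deriv w) ξ = l * w ξ)
    (hu₁ : deriv u (-1) = 0) (hw₁ : w 1 = 0) (h₀ : l * u 0 = w 0)
    (h₀' : deriv u 0 = deriv w 0) :
    (∀ ξ ∈ Icc (-1:ℝ) 0, u ξ = 0) ∧ (∀ ξ ∈ Icc (0:ℝ) 1, w ξ = 0) := by
  have hl : l ≠ 0 := hml ▸ pow_ne_zero 2 hm
  obtain ⟨hu_eq, hu'_eq⟩ := eqOn_coshSinhComb hl hu hu''
  obtain ⟨hw_eq, -⟩ := eqOn_coshSinhComb hm hw (hml ▸ hw'')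
  have h0 : (0:ℝ) ∈ Icc (-1) 0 := by norm_num
  have hu0 : u 0 = u (-1) * cosh l := by simpa [coshSinhComb, hu₁] using hu_eq h0
  have hu'0 : deriv u 0 = l * u (-1) * sinh l := by
    simpa [coshSinhComb, hu₁] using hu'_eq h0
  have hw1 : w 0 * cosh m + deriv w 0 / m * sinh m = 0 := by
    simpa [coshSinhComb, hw₁] using (hw_eq (by norm_num : (1:ℝ) ∈ Icc 0 1)).symm
  have hA : u (-1) = 0 := by
    have : l * u (-1) * (m * cosh l * cosh m + sinh l * sinh m) = 0 := by
      rw [← mul_zero m, ← hw1, ← h₀, ← h₀', hu0, hu'0]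
      field_simp
    simpa [hl, hD] using this
  have hw0 : w 0 = 0 := by rw [← h₀, hu0, hA]; ring
  have hw'0 : deriv w 0 = 0 := by rw [← h₀', hu'0, hA]; ring
  exact ⟨fun ξ hξ => by simp [hu_eq hξ, coshSinhComb, hA, hu₁],
    fun ξ hξ => by simp [hw_eq hξ, coshSinhComb, hw0, hw'0]⟩

/-- For `λ ∈ ℂ`, `λ ≠ 0`: there exist twice continuously differentiable `u : [-1,0] → ℂ`
and `w : [0,1] → ℂ`, not both identically zero, with `u'' = λ²u` on `[-1,0]`, `w'' = λw`
on `[0,1]`, `u'(-1) = 0`, `w(1) = 0`, `λu(0) = w(0)` and `u'(0) = w'(0)`, if and only if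
`√λ·cosh(λ)·cosh(√λ) + sinh(λ)·sinh(√λ) = 0`, where `√λ = λ ^ (1/2 : ℂ)` is the principal
branch of the complex square root. -/
theorem wave_heat_neumann_eigenvalue_characterization (l : ℂ) (hl : l ≠ 0) :
    (∃ u w : ℝ → ℂ, ContDiff ℝ 2 u ∧ ContDiff ℝ 2 w ∧
        (∀ ξ ∈ Set.Icc (-1:ℝ) 0, deriv (deriv u) ξ = l ^ 2 * u ξ) ∧
        (∀ ξ ∈ Set.Icc (0:ℝ) 1, deriv (deriv w) ξ = l * w ξ) ∧
        deriv u (-1) = 0 ∧ w 1 = 0 ∧ l * u 0 = w 0 ∧ deriv u 0 = deriv w 0 ∧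
        ¬ ((∀ ξ ∈ Set.Icc (-1:ℝ) 0, u ξ = 0) ∧ (∀ ξ ∈ Set.Icc (0:ℝ) 1, w ξ = 0))) ↔
      l ^ (1/2 : ℂ) * Complex.cosh l * Complex.cosh (l ^ (1/2 : ℂ)) +
        Complex.sinh l * Complex.sinh (l ^ (1/2 : ℂ)) = 0 := by
  have hml : (l ^ (1/2 : ℂ)) ^ 2 = l := by simp
  have hm : l ^ (1/2 : ℂ) ≠ 0 := fun hm => hl (by rw [← hml, hm, zero_pow two_ne_zero])
  constructor
  · rintro ⟨u, w, hu, hw, hu'', hw'', hu₁, hw₁, h₀, h₀', hne⟩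
    by_contra hD
    exact hne (coupled_solution_eq_zero_of_det_ne_zero hm hml hD hu hw hu'' hw'' hu₁ hw₁ h₀ h₀')
  · exact exists_coupled_solution_of_det_eq_zero hm hml
end

section
/- Let s be a nonzero real number. If u : [-1,0] → ℂ and w : [0,1] → ℂ are twice continuously differentiable functions satisfying u''(ξ) = −s²·u(ξ) for all ξ ∈ [-1,0], w''(ξ) = i·s·w(ξ) for all ξ ∈ [0,1], u'(-1) = 0, w(1) = 0, i·s·u(0) = w(0) and u'(0) = w'(0), then u ≡ 0 and w ≡ 0. -/
/-!
Write `flux f = f' · conj f`, so that `(flux f)' = f'' · conj f + |f'|²`. On the wave side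
`u'' = -s² u` makes `Im (flux u)` constant, hence zero by `u'(-1) = 0`. The transmission conditions
turn this into `Re (flux w) (0) = s · Im (flux u) (0) = 0`, and `Re (flux w)` also vanishes at `1`.
On the heat side `w'' = i s w` gives `(Re (flux w))' = |w'|² ≥ 0`, so `w' ≡ 0` and `w ≡ w(1) = 0`.
Then `u(0) = u'(0) = 0`, and the conserved wave energy `|u'|² + s² |u|²` forces `u ≡ 0`.
-/

open Complex Set ComplexConjugate

/-- The boundary term produced by multiplying `f'' = c f` by `conj f` and integrating by parts. -/
noncomputable def flux (f : ℝ → ℂ) (x : ℝ) : ℂ := deriv f x * conj (f x)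

section

variable {f : ℝ → ℂ} {a b : ℝ}

theorem hasDerivAt_flux (hf : Differentiable ℝ f) (hf' : Differentiable ℝ (deriv f)) (x : ℝ) :
    HasDerivAt (flux f) (deriv (deriv f) x * conj (f x) + normSq (deriv f x)) x := by
  have h := (hf' x).hasDerivAt.mul (hf x).hasDerivAt.star
  rwa [star_def, mul_conj] at h

theorem flux_im_eq_of_deriv_deriv_eq_real_mul (hf : Differentiable ℝ f)
    (hf' : Differentiable ℝ (deriv f)) (r : ℝ)
    (hode : ∀ x ∈ Icc a b, deriv (deriv f) x = r * f x) :
    ∀ x ∈ Icc a b, (flux f x).im = (flux f a).im := by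
  have hcont : Continuous (fun x => (flux f x).im) :=
    continuous_im.comp (hf'.continuous.mul (continuous_conj.comp hf.continuous))
  refine constant_of_has_deriv_right_zero hcont.continuousOn fun x hx => ?_
  have h := imCLM.hasFDerivAt.comp_hasDerivAt x (hasDerivAt_flux hf hf' x)
  have hzero : (deriv (deriv f) x * conj (f x) + normSq (deriv f x)).im = 0 := by
    rw [hode x (Ico_subset_Icc_self hx), mul_assoc, mul_conj, ← ofReal_mul, ← ofReal_add,
      ofReal_im]
  simp only [imCLM_apply, hzero] at h
  exact h.hasDerivWithinAt

theorem eq_zero_of_hasDerivAt_nonneg_of_eq {g g' : ℝ → ℝ} (hab : a < b)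
    (hg : ∀ x ∈ Icc a b, HasDerivAt g (g' x) x) (hg' : ∀ x ∈ Icc a b, 0 ≤ g' x)
    (hgab : g a = g b) : ∀ x ∈ Icc a b, g' x = 0 := by
  have hmono : MonotoneOn g (Icc a b) :=
    monotoneOn_of_hasDerivWithinAt_nonneg (convex_Icc a b)
      (fun x hx => (hg x hx).continuousAt.continuousWithinAt)
      (fun x hx => (hg x (interior_subset hx)).hasDerivWithinAt)
      (fun x hx => hg' x (interior_subset hx))
  have hconst : EqOn g (fun _ => g a) (Icc a b) := fun x hx =>
    le_antisymm (hgab ▸ hmono hx (right_mem_Icc.2 hab.le) hx.2)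
      (hmono (left_mem_Icc.2 hab.le) hx hx.1)
  intro x hx
  exact (uniqueDiffOn_Icc hab x hx).eq_deriv _ (hg x hx).hasDerivWithinAt
    ((hasDerivWithinAt_const x _ (g a)).congr hconst (hconst hx))

theorem deriv_eq_zero_of_flux_re_eq (hf : Differentiable ℝ f)
    (hf' : Differentiable ℝ (deriv f)) (hab : a < b) {c : ℂ} (hc : 0 ≤ c.re)
    (hode : ∀ x ∈ Icc a b, deriv (deriv f) x = c * f x) (hflux : (flux f a).re = (flux f b).re) :
    ∀ x ∈ Icc a b, deriv f x = 0 := by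
  have hderiv : ∀ x ∈ Icc a b, HasDerivAt (fun x => (flux f x).re)
      (c.re * normSq (f x) + normSq (deriv f x)) x := by
    intro x hx
    have h := reCLM.hasFDerivAt.comp_hasDerivAt x (hasDerivAt_flux hf hf' x)
    rwa [reCLM_apply, hode x hx, mul_assoc, mul_conj, add_re, ofReal_re, re_mul_ofReal] at h
  have hnonneg : ∀ x, 0 ≤ c.re * normSq (f x) := fun x => mul_nonneg hc (normSq_nonneg _)
  intro x hx
  have h := eq_zero_of_hasDerivAt_nonneg_of_eq hab hderiv
    (fun x _ => add_nonneg (hnonneg x) (normSq_nonneg _)) hflux x hx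
  rw [← normSq_eq_zero]
  linarith [hnonneg x, normSq_nonneg (deriv f x)]

theorem eq_zero_of_deriv_deriv_eq_neg_mul (hf : Differentiable ℝ f)
    (hf' : Differentiable ℝ (deriv f)) {k : ℝ} (hk : 0 < k)
    (hode : ∀ x ∈ Icc a b, deriv (deriv f) x = -k * f x) (hb : f b = 0) (hb' : deriv f b = 0) :
    ∀ x ∈ Icc a b, f x = 0 := by
  let E : ℝ → ℝ := fun x => ‖deriv f x‖ ^ 2 + k * ‖f x‖ ^ 2
  have hE : ∀ x ∈ Ico a b, HasDerivWithinAt E 0 (Ici x) x := by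
    intro x hx
    have h := ((hf' x).hasDerivAt.norm_sq).add (((hf x).hasDerivAt.norm_sq).const_mul k)
    have hzero : 2 * inner ℝ (deriv f x) (deriv (deriv f) x)
        + k * (2 * inner ℝ (f x) (deriv f x)) = 0 := by
      rw [hode x (Ico_subset_Icc_self hx), ← ofReal_neg, ← real_smul,
        real_inner_smul_right, real_inner_comm]
      ring
    rw [hzero] at h
    exact h.hasDerivWithinAt
  have hcont : Continuous E :=
    (hf'.continuous.norm.pow 2).add (continuous_const.mul (hf.continuous.norm.pow 2))
  intro x hx
  have hEx : E x = 0 := by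
    have hba := constant_of_has_deriv_right_zero hcont.continuousOn hE
    rw [hba x hx, ← hba b (right_mem_Icc.2 (hx.1.trans hx.2))]
    simp [E, hb, hb']
  have : ‖f x‖ ^ 2 = 0 := by
    nlinarith [sq_nonneg ‖deriv f x‖, sq_nonneg ‖f x‖]
  simpa using this

theorem eq_left_of_deriv_eq_zero (hf : Differentiable ℝ f)
    (h : ∀ x ∈ Icc a b, deriv f x = 0) : ∀ x ∈ Icc a b, f x = f a :=
  constant_of_has_deriv_right_zero hf.continuous.continuousOn fun x hx =>
    h x (Ico_subset_Icc_self hx) ▸ (hf x).hasDerivAt.hasDerivWithinAt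

end

theorem flux_re_eq_mul_flux_im_of_transmission {u w : ℝ → ℂ} {s x : ℝ}
    (hval : I * s * u x = w x) (hderiv : deriv u x = deriv w x) :
    (flux w x).re = s * (flux u x).im := by
  simp only [flux, ← hval, ← hderiv, map_mul, conj_I, conj_ofReal, mul_re, mul_im, neg_re, neg_im,
    I_re, I_im, ofReal_re, ofReal_im, conj_re, conj_im]
  ring

/-- Let `s` be a nonzero real number. If `u : [-1,0] → ℂ` and `w : [0,1] → ℂ` are twice
continuously differentiable with `u'' = −s²u` on `[-1,0]`, `w'' = isw` on `[0,1]`,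
`u'(-1) = 0`, `w(1) = 0`, `isu(0) = w(0)` and `u'(0) = w'(0)`, then `u ≡ 0` and `w ≡ 0`
(on the respective intervals). -/
theorem wave_heat_neumann_injectivity_on_imaginary_axis (s : ℝ) (hs : s ≠ 0)
    (u w : ℝ → ℂ) (hu : ContDiff ℝ 2 u) (hw : ContDiff ℝ 2 w)
    (hode_u : ∀ ξ ∈ Set.Icc (-1:ℝ) 0, deriv (deriv u) ξ = -(s:ℂ) ^ 2 * u ξ)
    (hode_w : ∀ ξ ∈ Set.Icc (0:ℝ) 1, deriv (deriv w) ξ = Complex.I * s * w ξ)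
    (hbc_u : deriv u (-1) = 0) (hbc_w : w 1 = 0)
    (hcpl1 : Complex.I * s * u 0 = w 0) (hcpl2 : deriv u 0 = deriv w 0) :
    (∀ ξ ∈ Set.Icc (-1:ℝ) 0, u ξ = 0) ∧ (∀ ξ ∈ Set.Icc (0:ℝ) 1, w ξ = 0) := by
  have hu1 : Differentiable ℝ u := hu.differentiable two_ne_zero
  have hw1 : Differentiable ℝ w := hw.differentiable two_ne_zero
  have hu2 : Differentiable ℝ (deriv u) := by
    simpa using hu.differentiable_iteratedDeriv 1 (by norm_num)
  have hw2 : Differentiable ℝ (deriv w) := by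
    simpa using hw.differentiable_iteratedDeriv 1 (by norm_num)
  have hflux_u : (flux u 0).im = 0 := by
    rw [flux_im_eq_of_deriv_deriv_eq_real_mul hu1 hu2 (-s ^ 2) (by push_cast; exact hode_u) 0
      (right_mem_Icc.2 (by norm_num)), flux, hbc_u, zero_mul, zero_im]
  have hflux_w : (flux w 0).re = (flux w 1).re := by
    rw [flux_re_eq_mul_flux_im_of_transmission hcpl1 hcpl2, hflux_u, flux, hbc_w]; simp
  have hw' := deriv_eq_zero_of_flux_re_eq hw1 hw2 zero_lt_one (by simp) hode_w hflux_w
  have hw0 : ∀ ξ ∈ Icc (0:ℝ) 1, w ξ = 0 := fun ξ hξ => by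
    rw [eq_left_of_deriv_eq_zero hw1 hw' ξ hξ, ← eq_left_of_deriv_eq_zero hw1 hw' 1
      (right_mem_Icc.2 zero_le_one), hbc_w]
  have hu0 : u 0 = 0 := by
    simpa [hs, ← hcpl1] using hw0 0 (left_mem_Icc.2 zero_le_one)
  have hu'0 : deriv u 0 = 0 := hcpl2 ▸ hw' 0 (left_mem_Icc.2 zero_le_one)
  exact ⟨eq_zero_of_deriv_deriv_eq_neg_mul hu1 hu2 (by positivity : 0 < s ^ 2)
    (by push_cast; exact hode_u) hu0 hu'0, hw0⟩
end

section
/- Let u : [-1,0] → ℂ be twice continuously differentiable, v : [-1,0] → ℂ continuously differentiable, and w : [0,1] → ℂ twice continuously differentiable, and suppose u'(-1) = 0, w(1) = 0, v(0) = w(0) and u'(0) = w'(0). Then Re( ∫_{-1}^{0} v'(ξ)·conj(u'(ξ)) dξ + ∫_{-1}^{0} u''(ξ)·conj(v(ξ)) dξ + ∫_{0}^{1} w''(ξ)·conj(w(ξ)) dξ ) = −∫_{0}^{1} |w'(ξ)|² dξ. -/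
/-!
Integrating by parts, `∫ u''·v̄ = [u'·v̄] - conj (∫ v'·ū')` on `[-1, 0]` and
`∫ w''·w̄ = [w'·w̄] - ∫ |w'|²` on `[0, 1]`. The boundary conditions kill the outer boundary terms
and the coupling conditions make the two terms at `0` cancel, leaving `z - conj z - ∫ |w'|²`
with `z = ∫ v'·ū'`, whose real part is `-∫ |w'|²`.
-/

open intervalIntegral MeasureTheory
open scoped ComplexConjugate

section RCLike

variable {𝕜 : Type*} [RCLike 𝕜] {f g : ℝ → 𝕜}

theorem integral_deriv_mul_conj_eq_mul_conj_deriv (hf : ContDiff ℝ 1 f) (hg : ContDiff ℝ 1 g)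
    (a b : ℝ) :
    ∫ x in a..b, deriv f x * conj (g x) =
      f b * conj (g b) - f a * conj (g a) - ∫ x in a..b, f x * conj (deriv g x) := by
  have hf' := hf.continuous_deriv le_rfl
  have hg' := hg.continuous_deriv le_rfl
  have hgc : Continuous fun x => conj (g x) := RCLike.continuous_conj.comp hg.continuous
  have hg'c : Continuous fun x => conj (deriv g x) := RCLike.continuous_conj.comp hg'
  have hint₁ : IntervalIntegrable (fun x => deriv f x * conj (g x)) volume a b :=
    (hf'.mul hgc).intervalIntegrable a b
  have hint₂ : IntervalIntegrable (fun x => f x * conj (deriv g x)) volume a b :=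
    (hf.continuous.mul hg'c).intervalIntegrable a b
  rw [eq_sub_iff_add_eq, ← integral_add hint₁ hint₂]
  exact integral_deriv_mul_eq_sub (fun x _ => (hf.differentiable one_ne_zero x).hasDerivAt)
    (fun x _ => ((hg.differentiable one_ne_zero x).hasDerivAt).star)
    (hf'.intervalIntegrable a b) (hg'c.intervalIntegrable a b)

theorem integral_mul_conj_eq_conj_integral (f g : ℝ → 𝕜) (a b : ℝ) :
    ∫ x in a..b, f x * conj (g x) = conj (∫ x in a..b, g x * conj (f x)) := by
  rw [← intervalIntegral_conj]
  simp [mul_comm]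

theorem integral_mul_conj_self (f : ℝ → 𝕜) (a b : ℝ) :
    ∫ x in a..b, f x * conj (f x) = ((∫ x in a..b, ‖f x‖ ^ 2 : ℝ) : 𝕜) := by
  simp_rw [RCLike.mul_conj, ← RCLike.ofReal_pow, RCLike.intervalIntegral_ofReal]

end RCLike

/-- Dissipativity identity for the wave-heat generator: if `u : [-1,0] → ℂ` is twice
continuously differentiable, `v : [-1,0] → ℂ` is continuously differentiable,
`w : [0,1] → ℂ` is twice continuously differentiable, and `u'(-1) = 0`, `w(1) = 0`,
`v(0) = w(0)`, `u'(0) = w'(0)`, then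
`Re(∫_{-1}^0 v'·conj(u') + ∫_{-1}^0 u''·conj(v) + ∫_0^1 w''·conj(w)) = −∫_0^1 |w'|²`. -/
theorem wave_heat_dissipativity_identity (u v w : ℝ → ℂ)
    (hu : ContDiff ℝ 2 u) (hv : ContDiff ℝ 1 v) (hw : ContDiff ℝ 2 w)
    (hbc_u : deriv u (-1) = 0) (hbc_w : w 1 = 0)
    (hcpl1 : v 0 = w 0) (hcpl2 : deriv u 0 = deriv w 0) :
    ((∫ ξ in (-1:ℝ)..0, deriv v ξ * (starRingEnd ℂ) (deriv u ξ)) +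
        (∫ ξ in (-1:ℝ)..0, deriv (deriv u) ξ * (starRingEnd ℂ) (v ξ)) +
        (∫ ξ in (0:ℝ)..1, deriv (deriv w) ξ * (starRingEnd ℂ) (w ξ))).re =
      -∫ ξ in (0:ℝ)..1, ‖deriv w ξ‖ ^ 2 := by
  rw [integral_deriv_mul_conj_eq_mul_conj_deriv hu.deriv' hv,
    integral_deriv_mul_conj_eq_mul_conj_deriv hw.deriv' hw.of_succ,
    integral_mul_conj_eq_conj_integral (deriv u), integral_mul_conj_self,
    hbc_u, hbc_w, hcpl1, hcpl2]
  simp only [map_zero, zero_mul, mul_zero, sub_zero, Complex.add_re, Complex.sub_re,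
    Complex.zero_re, Complex.conj_re, Complex.coe_algebraMap, Complex.ofReal_re]
  ring
end

section
/- There exists a constant C > 0 such that for every real s with |s| ≥ 2 and every real r with |r| ≤ 1, both |s·cosh(r·√(is))| ≤ C·|D(s)| and |s·sinh(r·√(is))| ≤ C·|D(s)| hold, where D(s) = (is)^{3/2}·cos(s)·cosh(√(is)) − s·sin(s)·sinh(√(is)). -/
/-!
With `w = √(is)` one has `w² = is`, `Re w = √(|s|/2) ≥ 1` and `|Im w| = Re w`, and
`D(s) = s · E` with `E = cos s · (i w cosh w) - sin s · sinh w`. The left-hand sides are at most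
`|s| cosh (Re w)`, so it suffices to bound `cosh (Re w)` by a multiple of `‖E‖`.
For `a = i w cosh w` and `b = sinh w`, the imaginary parts of `b̄ E` and `ā E` are `cos s · K`
and `sin s · K` with `K = Im (b̄ a) = (u sinh 2u + v sin 2v) / 2` (`w = u + v i`), whence
`|K| ≤ (‖a‖ + ‖b‖) ‖E‖`. Since `K` grows like `u sinh u cosh u` while `‖a‖ + ‖b‖` is only
`O(u cosh u)`, this forces `‖E‖ ≳ sinh u ≳ cosh u`.
-/

/-- The determinant `D(s) = (is)^{3/2}·cos(s)·cosh(√(is)) − s·sin(s)·sinh(√(is))` of the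
coupling matrix of the wave-heat resolvent equation, where `√(is)` is the principal
branch of the complex square root and `(is)^{3/2} = (√(is))³`. -/
noncomputable def couplingDet (s : ℝ) : ℂ :=
  ((Complex.I * s) ^ (1/2 : ℂ)) ^ 3 * Complex.cos s *
      Complex.cosh ((Complex.I * s) ^ (1/2 : ℂ)) -
    (s : ℂ) * Complex.sin s * Complex.sinh ((Complex.I * s) ^ (1/2 : ℂ))

open ComplexConjugate

theorem Real.cosh_le_of_sinh_mul_cosh_le {u E : ℝ} (hu : 1 ≤ u)
    (h : Real.sinh u * Real.cosh u - 1 / 2 ≤ 3 * Real.cosh u * E) : Real.cosh u ≤ 12 * E := by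
  have hA := Real.one_le_cosh u
  have hB : 1 ≤ Real.sinh u := hu.trans (Real.self_le_sinh_iff.2 (by linarith))
  have hAB : Real.cosh u ≤ Real.sinh u + 1 := by
    linarith [Real.cosh_sub_sinh u, Real.exp_le_one_iff.2 (by linarith : -u ≤ 0)]
  have hdiv : Real.cosh u * (Real.sinh u - 1 / 2) ≤ Real.cosh u * (3 * E) := by linarith
  linarith [le_of_mul_le_mul_left hdiv (by linarith)]

namespace Complex

theorem cpow_half_sq (z : ℂ) : (z ^ (1/2 : ℂ)) ^ 2 = z := by
  rw [one_div]; exact cpow_ofNat_inv_pow z 2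

theorem cosh_eq_re_im (z : ℂ) :
    cosh z = Real.cosh z.re * Real.cos z.im + Real.sinh z.re * Real.sin z.im * I := by
  conv_lhs => rw [← re_add_im z]
  rw [cosh_add, cosh_mul_I, sinh_mul_I, ← ofReal_cosh, ← ofReal_sinh, ← ofReal_cos, ← ofReal_sin]
  ring

theorem sinh_eq_re_im (z : ℂ) :
    sinh z = Real.sinh z.re * Real.cos z.im + Real.cosh z.re * Real.sin z.im * I := by
  conv_lhs => rw [← re_add_im z]
  rw [sinh_add, cosh_mul_I, sinh_mul_I, ← ofReal_cosh, ← ofReal_sinh, ← ofReal_cos, ← ofReal_sin]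
  ring

theorem norm_cosh_le (z : ℂ) : ‖cosh z‖ ≤ Real.cosh z.re := by
  rw [cosh, norm_div, Real.cosh_eq, RCLike.norm_ofNat]
  gcongr
  exact (norm_add_le _ _).trans_eq (by simp [norm_exp])

theorem norm_sinh_le (z : ℂ) : ‖sinh z‖ ≤ Real.cosh z.re := by
  rw [sinh, norm_div, Real.cosh_eq, RCLike.norm_ofNat]
  gcongr
  exact (norm_sub_le _ _).trans_eq (by simp [norm_exp])

theorem re_cpow_half_of_re_eq_zero {z : ℂ} (hz : z.re = 0) :
    (z ^ (1/2 : ℂ)).re = √(‖z‖ / 2) := by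
  rw [one_div, cpow_inv_two_re, hz, add_zero]

theorem abs_im_cpow_half_of_re_eq_zero {z : ℂ} (hz : z.re = 0) :
    |(z ^ (1/2 : ℂ)).im| = (z ^ (1/2 : ℂ)).re := by
  have hre : (z ^ (1/2 : ℂ)).re ^ 2 - (z ^ (1/2 : ℂ)).im ^ 2 = 0 := by
    have := congrArg re (cpow_half_sq z)
    rw [sq, mul_re, hz] at this
    linarith
  refine (sq_eq_sq₀ (abs_nonneg _) ?_).1 (by rw [sq_abs]; linarith)
  rw [re_cpow_half_of_re_eq_zero hz]
  exact Real.sqrt_nonneg _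

theorem im_conj_sinh_mul_I_mul_cosh (w : ℂ) :
    (conj (sinh w) * (I * w * cosh w)).im =
      (w.re * Real.sinh (2 * w.re) + w.im * Real.sin (2 * w.im)) / 2 := by
  rw [cosh_eq_re_im, sinh_eq_re_im, Real.sinh_two_mul, Real.sin_two_mul]
  simp only [mul_im, mul_re, conj_re, conj_im, add_re, add_im, ofReal_re, ofReal_im, I_re, I_im]
  linear_combination (w.re * Real.sinh w.re * Real.cosh w.re) * Real.sin_sq_add_cos_sq w.im
    + (w.im * Real.sin w.im * Real.cos w.im) * Real.cosh_sq_sub_sinh_sq w.re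

theorem abs_im_conj_mul_le (a b : ℂ) {c d : ℝ} (hcd : c ^ 2 + d ^ 2 = 1) :
    |(conj b * a).im| ≤ (‖a‖ + ‖b‖) * ‖c * a - d * b‖ := by
  set K := (conj b * a).im
  set E := (c : ℂ) * a - d * b
  have hb : (conj b * E).im = c * K := by
    simp only [E, K, mul_sub, sub_im, mul_im, mul_re, conj_re, conj_im, ofReal_re, ofReal_im]; ring
  have ha : (conj a * E).im = d * K := by
    simp only [E, K, mul_sub, sub_im, mul_im, mul_re, conj_re, conj_im, ofReal_re, ofReal_im]; ring
  have hc : |c| ≤ 1 := (sq_le_one_iff_abs_le_one c).1 (by nlinarith)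
  have hd : |d| ≤ 1 := (sq_le_one_iff_abs_le_one d).1 (by nlinarith)
  have hbE : |c * K| ≤ ‖b‖ * ‖E‖ := by
    rw [← hb, ← norm_conj b, ← norm_mul]; exact abs_im_le_norm _
  have haE : |d * K| ≤ ‖a‖ * ‖E‖ := by
    rw [← ha, ← norm_conj a, ← norm_mul]; exact abs_im_le_norm _
  calc |K| = |c * (c * K) + d * (d * K)| := by
        rw [show c * (c * K) + d * (d * K) = K by linear_combination K * hcd]
    _ ≤ |c| * |c * K| + |d| * |d * K| := by
      rw [← abs_mul, ← abs_mul]; exact abs_add_le _ _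
    _ ≤ 1 * (‖b‖ * ‖E‖) + 1 * (‖a‖ * ‖E‖) := by gcongr
    _ = (‖a‖ + ‖b‖) * ‖E‖ := by ring

theorem cosh_re_le_norm_I_mul_cosh_sub_sinh (w : ℂ) (hu : 1 ≤ w.re) (hv : |w.im| ≤ w.re)
    {c d : ℝ} (hcd : c ^ 2 + d ^ 2 = 1) :
    Real.cosh w.re ≤ 12 * ‖c * (I * w * cosh w) - d * sinh w‖ := by
  set u := w.re
  set E := ‖c * (I * w * cosh w) - d * sinh w‖
  have hK := abs_im_conj_mul_le (I * w * cosh w) (sinh w) hcd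
  rw [im_conj_sinh_mul_I_mul_cosh] at hK
  have hsin : -u ≤ w.im * Real.sin (2 * w.im) := by
    have : |w.im * Real.sin (2 * w.im)| ≤ u := by
      rw [abs_mul]
      exact (mul_le_of_le_one_right (abs_nonneg _) (Real.abs_sin_le_one _)).trans hv
    linarith [neg_abs_le (w.im * Real.sin (2 * w.im))]
  have ha : ‖I * w * cosh w‖ ≤ 2 * u * Real.cosh u := by
    rw [norm_mul, norm_mul, norm_I, one_mul]
    gcongr
    · exact (norm_le_abs_re_add_abs_im w).trans
        (by rw [abs_of_nonneg (by linarith : 0 ≤ u)]; linarith)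
    · exact norm_cosh_le w
  have hA := Real.one_le_cosh u
  have hE : 0 ≤ E := norm_nonneg _
  have hgrowth : u * (Real.sinh u * Real.cosh u - 1 / 2) ≤ u * (3 * Real.cosh u * E) :=
    calc u * (Real.sinh u * Real.cosh u - 1 / 2)
        ≤ |(u * Real.sinh (2 * u) + w.im * Real.sin (2 * w.im)) / 2| := by
          refine le_trans ?_ (le_abs_self _)
          rw [Real.sinh_two_mul]
          linarith
      _ ≤ (2 * u * Real.cosh u + Real.cosh u) * E := hK.trans (by gcongr; exact norm_sinh_le w)
      _ ≤ u * (3 * Real.cosh u * E) := by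
          nlinarith [mul_nonneg (sub_nonneg.2 hu) (mul_nonneg (zero_le_one.trans hA) hE)]
  exact Real.cosh_le_of_sinh_mul_cosh_le hu (le_of_mul_le_mul_left hgrowth (by linarith))

end Complex

open Complex

theorem couplingDet_eq (s : ℝ) :
    couplingDet s = s * (Real.cos s * (I * (I * s) ^ (1/2 : ℂ) * cosh ((I * s) ^ (1/2 : ℂ))) -
      Real.sin s * sinh ((I * s) ^ (1/2 : ℂ))) := by
  rw [couplingDet, pow_succ, cpow_half_sq, ofReal_cos, ofReal_sin]
  ring

/-- There is a constant `C > 0` such that for all real `s` with `|s| ≥ 2` and all real `r`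
with `|r| ≤ 1`, both `|s·cosh(r√(is))| ≤ C·|D(s)|` and `|s·sinh(r√(is))| ≤ C·|D(s)|`. -/
theorem coupling_determinant_dominates :
    ∃ C : ℝ, 0 < C ∧ ∀ s : ℝ, 2 ≤ |s| → ∀ r : ℝ, |r| ≤ 1 →
      ‖(s : ℂ) * Complex.cosh ((r : ℂ) * (Complex.I * s) ^ (1/2 : ℂ))‖ ≤
          C * ‖couplingDet s‖ ∧
        ‖(s : ℂ) * Complex.sinh ((r : ℂ) * (Complex.I * s) ^ (1/2 : ℂ))‖ ≤
          C * ‖couplingDet s‖ := by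
  refine ⟨12, by norm_num, fun s hs r hr => ?_⟩
  set w := (I * s) ^ (1/2 : ℂ)
  have hz : (I * s).re = 0 := by simp
  have hw : 1 ≤ w.re := by
    rw [re_cpow_half_of_re_eq_zero hz, norm_mul, norm_I, one_mul, norm_real, Real.norm_eq_abs,
      Real.one_le_sqrt]
    linarith
  have hE := cosh_re_le_norm_I_mul_cosh_sub_sinh w hw (abs_im_cpow_half_of_re_eq_zero hz).le
    (Real.cos_sq_add_sin_sq s)
  have hrw : Real.cosh (r * w).re ≤ Real.cosh w.re := by
    rw [re_ofReal_mul, Real.cosh_le_cosh, abs_mul]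
    exact mul_le_of_le_one_left (abs_nonneg _) hr
  have key : ∀ y : ℂ, ‖y‖ ≤ Real.cosh (r * w).re → ‖(s : ℂ) * y‖ ≤ 12 * ‖couplingDet s‖ := by
    intro y hy
    rw [couplingDet_eq, norm_mul, norm_mul, mul_left_comm]
    exact mul_le_mul_of_nonneg_left (hy.trans (hrw.trans hE)) (norm_nonneg _)
  exact ⟨key _ (norm_cosh_le _), key _ (norm_sinh_le _)⟩
end

section
/- For every real number s ≠ 0, √(is)·sinh(is)·cosh(√(is)) + cosh(is)·sinh(√(is)) ≠ 0. -/
/-!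
With `w = √(is)` we have `w² = is`, so the expression equals `i sin s · w cosh w + cos s · sinh w`,
and `w = a + bi` lies in the sector `|b| ≤ a`, `a > 0`. Multiplying by `conj (w cosh w)` makes the
first term purely imaginary, whereas `Re (conj (w cosh w) · sinh w) = (a sinh 2a + b sin 2b) / 2`
is positive in that sector because `|b sin 2b| ≤ 2b² ≤ 2a² < a sinh 2a`. Hence `cos s = 0`, so
`w cosh w = 0`, which makes the same positive real part vanish.
-/

open Complex ComplexConjugate

theorem two_mul_sinh_mul_cosh_conj (w : ℂ) :
    2 * (sinh w * cosh (conj w)) = Real.sinh (2 * w.re) + Real.sin (2 * w.im) * I := by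
  have hadd : w + conj w = ((2 * w.re : ℝ) : ℂ) := by rw [add_conj]
  have hsub : w - conj w = ((2 * w.im : ℝ) : ℂ) * I := by rw [sub_conj]
  have hsum : 2 * (sinh w * cosh (conj w)) = sinh (w + conj w) + sinh (w - conj w) := by
    rw [sinh_add, sinh_sub]; ring
  rw [hsum, hadd, hsub, sinh_mul_I, ofReal_sinh, ofReal_sin]

theorem re_conj_mul_cosh_mul_sinh (w : ℂ) :
    (conj (w * cosh w) * sinh w).re =
      (w.re * Real.sinh (2 * w.re) + w.im * Real.sin (2 * w.im)) / 2 := by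
  have h : conj (w * cosh w) * sinh w = conj w * (2 * (sinh w * cosh (conj w))) / 2 := by
    rw [map_mul, ← cosh_conj]; ring
  rw [h, two_mul_sinh_mul_cosh_conj]
  simp only [div_ofNat_re, mul_re, mul_im, add_re, add_im, conj_re, conj_im, ofReal_re, ofReal_im,
    I_re, I_im]
  ring

theorem re_conj_mul_cosh_mul_sinh_pos {w : ℂ} (hre : 0 < w.re) (him : |w.im| ≤ w.re) :
    0 < (conj (w * cosh w) * sinh w).re := by
  rw [re_conj_mul_cosh_mul_sinh]
  have hsinh : 2 * w.re < Real.sinh (2 * w.re) := Real.self_lt_sinh_iff.mpr (by linarith)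
  have hsin : |w.im * Real.sin (2 * w.im)| ≤ 2 * w.re ^ 2 := by
    rw [abs_mul]
    calc |w.im| * |Real.sin (2 * w.im)| ≤ |w.im| * |2 * w.im| :=
          mul_le_mul_of_nonneg_left Real.abs_sin_le_abs (abs_nonneg _)
      _ = 2 * |w.im| ^ 2 := by rw [abs_mul, abs_two]; ring
      _ ≤ 2 * w.re ^ 2 := by gcongr
  nlinarith [neg_abs_le (w.im * Real.sin (2 * w.im))]

theorem I_mul_mul_cosh_add_mul_sinh_ne_zero {w : ℂ} (hre : 0 < w.re) (him : |w.im| ≤ w.re)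
    {S C : ℝ} (hSC : S ≠ 0 ∨ C ≠ 0) : I * S * (w * cosh w) + C * sinh w ≠ 0 := by
  intro h
  have hpos := re_conj_mul_cosh_mul_sinh_pos hre him
  have hproj : I * (S * normSq (w * cosh w) : ℝ) + C * (conj (w * cosh w) * sinh w) = 0 := by
    push_cast
    linear_combination conj (w * cosh w) * h - I * S * mul_conj (w * cosh w)
  have hC : C = 0 := by
    have hproj_re := congrArg re hproj
    simp only [add_re, mul_re, I_re, I_im, ofReal_re, ofReal_im, zero_re, zero_mul, one_mul,
      sub_zero, zero_add] at hproj_re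
    exact (mul_eq_zero.mp hproj_re).resolve_right hpos.ne'
  have hS : (S : ℂ) ≠ 0 := ofReal_ne_zero.mpr (hSC.resolve_right (not_not.mpr hC))
  rw [hC, ofReal_zero, zero_mul, add_zero] at h
  have hwc : w * cosh w = 0 := (mul_eq_zero.mp h).resolve_left (mul_ne_zero I_ne_zero hS)
  simp [hwc] at hpos

theorem re_cpow_inv_two_pos {z : ℂ} (hz : z ≠ 0) (hre : 0 ≤ z.re) : 0 < (z ^ (2⁻¹ : ℂ)).re := by
  rw [cpow_inv_two_re]
  exact Real.sqrt_pos.mpr (by positivity)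

theorem abs_im_cpow_inv_two_le_re {z : ℂ} (hre : 0 ≤ z.re) :
    |(z ^ (2⁻¹ : ℂ)).im| ≤ (z ^ (2⁻¹ : ℂ)).re := by
  have hsq : (z ^ (2⁻¹ : ℂ)) ^ 2 = z := by exact_mod_cast cpow_nat_inv_pow z two_ne_zero
  have hnonneg : 0 ≤ (z ^ (2⁻¹ : ℂ)).re := by rw [cpow_inv_two_re]; positivity
  refine abs_le_of_sq_le_sq ?_ hnonneg
  have hsq_re := congrArg re hsq
  rw [sq, mul_re] at hsq_re
  nlinarith

/-- For every real `s ≠ 0`, `√(is)·sinh(is)·cosh(√(is)) + cosh(is)·sinh(√(is)) ≠ 0`,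
where `√z = z ^ (1/2 : ℂ)` is the principal branch of the complex square root.
(The spectrum of the wave-heat generator with Dirichlet condition at `ξ = -1` does not
meet the imaginary axis.) -/
theorem wave_heat_dirichlet_no_spectrum_on_imaginary_axis (s : ℝ) (hs : s ≠ 0) :
    (Complex.I * s) ^ (1/2 : ℂ) * Complex.sinh (Complex.I * s) *
        Complex.cosh ((Complex.I * s) ^ (1/2 : ℂ)) +
      Complex.cosh (Complex.I * s) * Complex.sinh ((Complex.I * s) ^ (1/2 : ℂ)) ≠ 0 := by
  have hz : I * s ≠ 0 := mul_ne_zero I_ne_zero (ofReal_ne_zero.mpr hs)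
  have hz_re : 0 ≤ (I * s).re := by simp
  have hsinh : sinh (I * s) = I * Real.sin s := by rw [mul_comm, sinh_mul_I, ofReal_sin, mul_comm]
  have hcosh : cosh (I * s) = Real.cos s := by rw [mul_comm, cosh_mul_I, ofReal_cos]
  have hSC : Real.sin s ≠ 0 ∨ Real.cos s ≠ 0 := by
    by_contra! h
    simpa [h.1, h.2] using Real.sin_sq_add_cos_sq s
  rw [one_div, hsinh, hcosh]
  convert I_mul_mul_cosh_add_mul_sinh_ne_zero (re_cpow_inv_two_pos hz hz_re)
    (abs_im_cpow_inv_two_le_re hz_re) hSC using 1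
  ring
end

section
/- There exists a constant c > 0 such that for every real number s with |s| ≥ 2, |√(is)·sinh(is)·cosh(√(is)) + cosh(is)·sinh(√(is))| ≥ c·exp(|s|^{1/2}/√2). -/
/-!
With `w = √(is)` one has `w = a (1 ± i)` where `a = √|s| / √2 ≥ 1`, while `sinh (is) = i sin s` and
`cosh (is) = cos s`. Expanding `cosh w` and `sinh w` into exponentials, the characteristic function
is `(e^w (i w sin s + cos s) + e^{-w} (i w sin s - cos s)) / 2`. The first coefficient has modulus
at least `1/2` uniformly in `s`, the second at most `3a`, and `|e^{±w}| = e^{±a}`; since `3a e^{-a}`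
is a small fraction of `e^a` for `a ≥ 1`, the first term dominates.
-/

open Complex

lemma le_norm_mul_cosh_add_mul_sinh (p q w : ℂ) :
    (Real.exp w.re * ‖p + q‖ - Real.exp (-w.re) * ‖p - q‖) / 2 ≤
      ‖p * cosh w + q * sinh w‖ := by
  have h : p * cosh w + q * sinh w = (exp w * (p + q) + exp (-w) * (p - q)) / 2 := by
    simp only [cosh, sinh]; ring
  have := norm_sub_le_norm_add (exp w * (p + q)) (exp (-w) * (p - q))
  rw [norm_mul, norm_mul, norm_exp, norm_exp, neg_re] at this
  rw [h, norm_div, norm_ofNat]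
  linarith

lemma half_le_norm_mul_mul_I_add {u c : ℝ} (huc : u ^ 2 + c ^ 2 = 1) {w : ℂ}
    (hre : 1 ≤ w.re) (him : |w.im| ≤ w.re) :
    1 / 2 ≤ ‖w * (u * I) + c‖ := by
  have hsq : ‖w * (u * I) + c‖ ^ 2 = (c - u * w.im) ^ 2 + (u * w.re) ^ 2 := by
    rw [Complex.sq_norm, normSq_apply]
    simp only [add_re, mul_re, ofReal_re, I_re, mul_zero, ofReal_im, I_im, mul_one, sub_self,
      mul_im, add_zero, zero_sub, add_im]
    ring
  have him_sq : w.im ^ 2 ≤ w.re ^ 2 := sq_le_sq' (abs_le.mp him).1 (abs_le.mp him).2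
  -- `(c - x)² + x² ≥ c²/2`, and `(u w.re)² ≥ u²`; since `u² + c² = 1` one of them is `≥ 1/3`.
  have : 1 / 4 ≤ ‖w * (u * I) + c‖ ^ 2 := by
    rw [hsq]
    nlinarith [sq_nonneg (c - 2 * u * w.im), mul_le_mul_of_nonneg_left him_sq (sq_nonneg u),
      mul_le_mul_of_nonneg_left (one_le_pow₀ (n := 2) hre) (sq_nonneg u)]
  nlinarith [norm_nonneg (w * (u * I) + c)]

lemma norm_mul_mul_I_sub_le {u c : ℝ} (hu : |u| ≤ 1) (hc : |c| ≤ 1) {w : ℂ}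
    (hre : 1 ≤ w.re) (him : |w.im| ≤ w.re) :
    ‖w * (u * I) - c‖ ≤ 3 * w.re := by
  calc ‖w * (u * I) - c‖ ≤ ‖w‖ * |u| + |c| := by
        simpa [norm_mul] using norm_sub_le (w * (u * I)) c
    _ ≤ ‖w‖ + 1 := by gcongr; exact mul_le_of_le_one_right (norm_nonneg w) hu
    _ ≤ |w.re| + |w.im| + 1 := by gcongr; exact norm_le_abs_re_add_abs_im w
    _ ≤ 3 * w.re := by rw [abs_of_pos (by linarith)]; linarith

lemma exp_neg_mul_three_mul_le {a : ℝ} (ha : 1 ≤ a) :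
    Real.exp (-a) * (3 * a) ≤ 9 / 20 * Real.exp a := by
  have he : 2.7 < Real.exp 1 := lt_trans (by norm_num) Real.exp_one_gt_d9
  calc Real.exp (-a) * (3 * a) ≤ Real.exp (-a) * (3 * Real.exp (a - 1)) := by
        gcongr; linarith [Real.add_one_le_exp (a - 1)]
    _ = 3 / Real.exp 1 := by rw [Real.exp_sub, Real.exp_neg]; field_simp
    _ ≤ 9 / 20 * Real.exp 1 := by rw [div_le_iff₀ (Real.exp_pos 1)]; nlinarith
    _ ≤ 9 / 20 * Real.exp a := by gcongr

lemma re_cpow_half_I_mul (s : ℝ) : ((I * s) ^ (1 / 2 : ℂ)).re = Real.sqrt |s| / Real.sqrt 2 := by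
  rw [one_div, cpow_inv_two_re]
  simp

lemma abs_im_cpow_half_I_mul (s : ℝ) :
    |((I * s) ^ (1 / 2 : ℂ)).im| = ((I * s) ^ (1 / 2 : ℂ)).re := by
  rw [one_div, cpow_inv_two_re, abs_cpow_inv_two_im]
  simp

/-- There exists `c > 0` such that for every real `s` with `|s| ≥ 2`,
`|√(is)·sinh(is)·cosh(√(is)) + cosh(is)·sinh(√(is))| ≥ c·exp(|s|^{1/2}/√2)`,
where `√z = z ^ (1/2 : ℂ)` is the principal branch of the complex square root
(Dirichlet case of the characteristic-function lower bound). -/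
theorem wave_heat_dirichlet_char_function_lower_bound :
    ∃ c : ℝ, 0 < c ∧ ∀ s : ℝ, 2 ≤ |s| →
      c * Real.exp (Real.sqrt |s| / Real.sqrt 2) ≤
        ‖(Complex.I * s) ^ (1/2 : ℂ) * Complex.sinh (Complex.I * s) *
            Complex.cosh ((Complex.I * s) ^ (1/2 : ℂ)) +
          Complex.cosh (Complex.I * s) * Complex.sinh ((Complex.I * s) ^ (1/2 : ℂ))‖ := by
  refine ⟨1 / 40, by norm_num, fun s hs => ?_⟩
  set w := (I * s) ^ (1 / 2 : ℂ)
  have hre : w.re = Real.sqrt |s| / Real.sqrt 2 := re_cpow_half_I_mul s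
  have him : |w.im| ≤ w.re := (abs_im_cpow_half_I_mul s).le
  have hre_one : 1 ≤ w.re := by
    rw [hre, le_div_iff₀ (by positivity), one_mul]
    exact Real.sqrt_le_sqrt hs
  rw [mul_comm I, sinh_mul_I, cosh_mul_I, ← ofReal_sin, ← ofReal_cos, ← hre]
  calc 1 / 40 * Real.exp w.re
      ≤ (Real.exp w.re * (1 / 2) - Real.exp (-w.re) * (3 * w.re)) / 2 := by
        linarith [exp_neg_mul_three_mul_le hre_one]
    _ ≤ (Real.exp w.re * ‖w * (Real.sin s * I) + Real.cos s‖
          - Real.exp (-w.re) * ‖w * (Real.sin s * I) - Real.cos s‖) / 2 := by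
        gcongr
        · exact half_le_norm_mul_mul_I_add (Real.sin_sq_add_cos_sq s) hre_one him
        · exact norm_mul_mul_I_sub_le (Real.abs_sin_le_one s) (Real.abs_cos_le_one s) hre_one him
    _ ≤ _ := le_norm_mul_cosh_add_mul_sinh _ _ w
end

section
/- There exists a constant C > 0 with the following property: for every absolutely continuous u : [-1,0] → ℂ with derivative u' ∈ L²(-1,0), every v ∈ L²(-1,0) and every w ∈ L²(0,1) satisfying u(0) + ∫_{-1}^{0} v(ξ) dξ + ∫_{0}^{1} (1−ξ)·w(ξ) dξ = 0, one has ‖u‖_{L²(-1,0)} ≤ C·( ‖u'‖_{L²(-1,0)} + ‖v‖_{L²(-1,0)} + ‖w‖_{L²(0,1)} ). -/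
/-!
Pointwise, `u x = u 0 - ∫_x^0 u'`, and the constraint expresses `u 0` through the integrals of
`v` and `(1 - ξ) w`. Each of these integrals is bounded by an `L¹` norm over an interval of
length one, hence by the corresponding `L²` norm (Cauchy–Schwarz). So
`sup |u| ≤ ‖u'‖ + ‖v‖ + ‖w‖`, and `C = 1` works.
-/

open MeasureTheory Set

lemma MeasureTheory.MemLp.intervalIntegrable_of_restrict_Ioo {E : Type*} [NormedAddCommGroup E]
    {p : ENNReal} (hp : 1 ≤ p) {f : ℝ → E} {a b : ℝ} (hab : a ≤ b)
    (hf : MemLp f p (volume.restrict (Ioo a b))) : IntervalIntegrable f volume a b := by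
  rw [intervalIntegrable_iff_integrableOn_Ioo_of_le hab]
  exact hf.integrable hp

lemma integral_norm_le_sqrt_mul_L2norm {a b : ℝ} (hab : a ≤ b) {f : ℝ → ℂ}
    (hf : MemLp f 2 (volume.restrict (Ioo a b))) :
    ∫ x in a..b, ‖f x‖ ≤ √(b - a) * L2norm a b f := by
  rw [Measure.restrict_congr_set Ioo_ae_eq_Ioc] at hf
  have hHolder := integral_mul_le_Lp_mul_Lq_of_nonneg Real.HolderConjugate.two_two
    (ae_of_all _ fun x => norm_nonneg (f x)) (ae_of_all _ fun _ => zero_le_one)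
    (by simpa using hf.norm) (by simpa using memLp_const (1:ℝ))
  simp only [mul_one, Real.rpow_two, integral_const, smul_eq_mul] at hHolder
  rw [L2norm, intervalIntegral.integral_of_le hab, intervalIntegral.integral_of_le hab,
    Real.sqrt_eq_rpow, Real.sqrt_eq_rpow, mul_comm]
  simpa [hab] using hHolder

lemma L2norm_le_sqrt_mul_of_norm_le {a b K : ℝ} (hab : a ≤ b) {f : ℝ → ℂ}
    (hf : ∀ x ∈ Icc a b, ‖f x‖ ≤ K) (hK : 0 ≤ K) : L2norm a b f ≤ √(b - a) * K := by
  have hint : ∫ x in a..b, ‖f x‖ ^ 2 ≤ (b - a) * K ^ 2 := by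
    rw [intervalIntegral.integral_of_le hab]
    calc ∫ x in Ioc a b, ‖f x‖ ^ 2 ≤ ∫ _ in Ioc a b, K ^ 2 :=
          integral_mono_of_nonneg (ae_of_all _ fun _ => by positivity) (integrable_const _)
            ((ae_restrict_iff' measurableSet_Ioc).2 (ae_of_all _ fun x hx =>
              pow_le_pow_left₀ (norm_nonneg _) (hf x (Ioc_subset_Icc_self hx)) 2))
      _ = (b - a) * K ^ 2 := by simp [hab]
  calc L2norm a b f ≤ √((b - a) * K ^ 2) := Real.sqrt_le_sqrt hint
    _ = √(b - a) * K := by rw [Real.sqrt_mul (by linarith), Real.sqrt_sq hK]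

lemma norm_le_norm_right_add_integral_norm {E : Type*} [NormedAddCommGroup E] [NormedSpace ℝ E]
    {u u' : ℝ → E} {a b x : ℝ} (hu : ∀ x ∈ Icc a b, u x = u a + ∫ t in a..x, u' t)
    (hu' : IntervalIntegrable u' volume a b) (hx : x ∈ Icc a b) :
    ‖u x‖ ≤ ‖u b‖ + ∫ t in a..b, ‖u' t‖ := by
  have hab : a ≤ b := hx.1.trans hx.2
  have hux : u x = u b - ∫ t in x..b, u' t := by
    rw [← intervalIntegral.integral_interval_sub_left hu' (hu'.mono_set _), hu x hx,
      hu b ⟨hab, le_rfl⟩]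
    · abel
    · rw [uIcc_of_le hx.1, uIcc_of_le hab]; exact Icc_subset_Icc le_rfl hx.2
  have htail : ‖∫ t in x..b, u' t‖ ≤ ∫ t in a..b, ‖u' t‖ :=
    (intervalIntegral.norm_integral_le_integral_norm hx.2).trans
      (intervalIntegral.integral_mono_interval hx.1 hx.2 le_rfl
        (ae_of_all _ fun _ => norm_nonneg _) hu'.norm)
  rw [hux]
  exact (norm_sub_le _ _).trans (add_le_add_right htail _)

lemma norm_one_sub_ofReal_mul_le {x : ℝ} (hx : x ∈ Icc (0:ℝ) 1) (z : ℂ) :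
    ‖(1 - (x : ℂ)) * z‖ ≤ ‖z‖ := by
  rw [norm_mul, ← Complex.ofReal_one, ← Complex.ofReal_sub, Complex.norm_real,
    Real.norm_of_nonneg (by linarith [hx.2])]
  exact mul_le_of_le_one_left (norm_nonneg z) (by linarith [hx.1])

/-- Poincaré-type inequality on the range of the wave-heat generator: there is `C > 0`
such that for every absolutely continuous `u : [-1,0] → ℂ` with derivative
`u' ∈ L²(-1,0)`, every `v ∈ L²(-1,0)` and every `w ∈ L²(0,1)` with
`u(0) + ∫_{-1}^0 v + ∫_0^1 (1−ξ)w = 0`, one has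
`‖u‖_{L²(-1,0)} ≤ C(‖u'‖_{L²(-1,0)} + ‖v‖_{L²(-1,0)} + ‖w‖_{L²(0,1)})`. -/
theorem poincare_inequality_on_range :
    ∃ C : ℝ, 0 < C ∧ ∀ u u' v w : ℝ → ℂ,
      (∀ x ∈ Set.Icc (-1:ℝ) 0, u x = u (-1) + ∫ t in (-1:ℝ)..x, u' t) →
      MemLp u' 2 (volume.restrict (Set.Ioo (-1:ℝ) 0)) →
      MemLp v 2 (volume.restrict (Set.Ioo (-1:ℝ) 0)) →
      MemLp w 2 (volume.restrict (Set.Ioo (0:ℝ) 1)) →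
      u 0 + (∫ ξ in (-1:ℝ)..0, v ξ) + (∫ ξ in (0:ℝ)..1, (1 - (ξ : ℂ)) * w ξ) = 0 →
      L2norm (-1) 0 u ≤ C * (L2norm (-1) 0 u' + L2norm (-1) 0 v + L2norm 0 1 w) := by
  refine ⟨1, one_pos, fun u u' v w hu hu' hv hw hsum => ?_⟩
  have hu'_L1 : ∫ t in (-1:ℝ)..0, ‖u' t‖ ≤ L2norm (-1) 0 u' := by
    simpa using integral_norm_le_sqrt_mul_L2norm (by norm_num) hu'
  have hv_bound : ‖∫ ξ in (-1:ℝ)..0, v ξ‖ ≤ L2norm (-1) 0 v :=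
    (intervalIntegral.norm_integral_le_integral_norm (by norm_num)).trans
      (by simpa using integral_norm_le_sqrt_mul_L2norm (by norm_num) hv)
  have hw_bound : ‖∫ ξ in (0:ℝ)..1, (1 - (ξ : ℂ)) * w ξ‖ ≤ L2norm 0 1 w :=
    calc _ ≤ ∫ ξ in (0:ℝ)..1, ‖w ξ‖ :=
          intervalIntegral.norm_integral_le_of_norm_le zero_le_one
            (ae_of_all _ fun ξ hξ => norm_one_sub_ofReal_mul_le (Ioc_subset_Icc_self hξ) _)
            (hw.intervalIntegrable_of_restrict_Ioo one_le_two zero_le_one).norm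
      _ ≤ L2norm 0 1 w := by simpa using integral_norm_le_sqrt_mul_L2norm zero_le_one hw
  have hu0 : ‖u 0‖ ≤ L2norm (-1) 0 v + L2norm 0 1 w := by
    rw [show u 0 = -(∫ ξ in (-1:ℝ)..0, v ξ) - ∫ ξ in (0:ℝ)..1, (1 - (ξ : ℂ)) * w ξ by
      linear_combination hsum]
    exact (norm_sub_le _ _).trans (by rw [norm_neg]; exact add_le_add hv_bound hw_bound)
  have hu_bound (x : ℝ) (hx : x ∈ Icc (-1:ℝ) 0) :
      ‖u x‖ ≤ L2norm (-1) 0 u' + L2norm (-1) 0 v + L2norm 0 1 w := by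
    have := norm_le_norm_right_add_integral_norm hu
      (hu'.intervalIntegrable_of_restrict_Ioo one_le_two (by norm_num)) hx
    linarith
  simpa using L2norm_le_sqrt_mul_of_norm_le (by norm_num) hu_bound
    (by simp only [L2norm]; positivity)
end
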